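/- arXiv:1505.05763 — 6 statements merged into one kernel-verified Lean document; each statement's English description precedes it below -/
import Mathlib

section
/- Let 1 < p < 2. Suppose g : Ω → ℝ is measurable with g ∈ 𝕃_0^{p,∞} and g − g∘T ∈ 𝕃_0^{p/(p-1),∞}. Then n^{-1/2} · max_{1 ≤ k ≤ n} |g ∘ T^k| converges to 0 in probability (in μ-measure) as n → ∞. (This is condition (1.6) of the equivalence theorem, so for any square-integrable martingale differences sequence (m∘T^i) the function f := m + g − g∘T satisfies the weak invariance principle.) -/
/-!
Write `h = g - g ∘ T`, `q = p / (p - 1)` and, at time `n` with `x = √n`, take `t = εx/4`,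
`M = x ^ (p - 1)` and `D = ⌊ε x ^ (2 - p) / 4⌋`. Along an orbit, `g ∘ T^i` moves by at most
`M + (|h ∘ T^i| - M)⁺` per step. So if `|g| ≤ t`, if at most `D` of the times `0, …, n` have
`|g ∘ T^j| > t`, and if `∑_{i<n} (|h ∘ T^i| - M)⁺ ≤ t`, then walking back from any `k ≤ n` to a
good time at most `D` steps earlier gives `|g ∘ T^k| ≤ 2t + DM ≤ 3t < ε√n`. By invariance of `μ`
and Markov's inequality the three exceptional events have measure at most `μ(|g| > t)`,
`(n + 1) μ(|g| > t) / (D + 1) ≲ t ^ p μ(|g| > t)` and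
`(n / t) ∫ (|h| - M)⁺ ≲ sup_{s ≥ M} s ^ q μ(|h| > s)`, the last by the layer-cake formula and
`∫_M^∞ s ^ (-q) ds = M ^ (1 - q) / (q - 1) = (p - 1) / x`. Both bounds tend to `0` by the
weak-type hypotheses.
-/

open MeasureTheory Filter Topology Set
open scoped ENNReal NNReal

noncomputable section

/-- Birkhoff sums `S_n(f) = ∑_{j=0}^{n-1} f ∘ T^j`. -/
def partialSumT {Ω : Type*} (T : Ω → Ω) (f : Ω → ℝ) (n : ℕ) (ω : Ω) : ℝ :=
  ∑ j ∈ Finset.range n, f (T^[j] ω)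

lemma exists_near_not_of_card_filter_le {P : ℕ → Prop} [DecidablePred P] {n D k : ℕ}
    (hk : k ≤ n) (h0 : ¬ P 0) (hcard : ((Finset.range (n + 1)).filter P).card ≤ D) :
    ∃ j ≤ k, k ≤ j + D ∧ ¬ P j := by
  by_contra! hbad
  by_cases hkD : k ≤ D
  · exact h0 (hbad 0 (Nat.zero_le k) (by omega))
  have hsub : Finset.Icc (k - D) k ⊆ (Finset.range (n + 1)).filter P := fun j hj => by
    rw [Finset.mem_Icc] at hj
    exact Finset.mem_filter.2 ⟨Finset.mem_range.2 (by omega), hbad j hj.2 (by omega)⟩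
  have := Finset.card_le_card hsub
  rw [Nat.card_Icc] at this
  omega

lemma abs_sub_le_mul_add_sum_excess (f : ℕ → ℝ) (M : ℝ) {j k : ℕ} (hjk : j ≤ k) :
    |f k - f j| ≤ (k - j : ℕ) * M + ∑ i ∈ Finset.Ico j k, max (|f i - f (i + 1)| - M) 0 := by
  calc |f k - f j| = |∑ i ∈ Finset.Ico j k, (f (i + 1) - f i)| := by
        rw [Finset.sum_Ico_sub f hjk]
    _ ≤ ∑ i ∈ Finset.Ico j k, (M + max (|f i - f (i + 1)| - M) 0) := by
        refine (Finset.abs_sum_le_sum_abs _ _).trans (Finset.sum_le_sum fun i _ => ?_)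
        rw [abs_sub_comm]
        linarith [le_max_left (|f i - f (i + 1)| - M) 0]
    _ = (k - j : ℕ) * M + ∑ i ∈ Finset.Ico j k, max (|f i - f (i + 1)| - M) 0 := by
        rw [Finset.sum_add_distrib, Finset.sum_const, Nat.card_Ico, nsmul_eq_mul]

lemma abs_le_of_card_filter_le_of_sum_excess_le {f : ℕ → ℝ} {t M : ℝ} {n D k : ℕ} (hM : 0 ≤ M)
    (hk : k ≤ n) (h0 : |f 0| ≤ t)
    (hcard : ((Finset.range (n + 1)).filter fun j => t < |f j|).card ≤ D)
    (hexcess : ∑ i ∈ Finset.range n, max (|f i - f (i + 1)| - M) 0 ≤ t) :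
    |f k| ≤ 2 * t + D * M := by
  obtain ⟨j, hjk, hkj, hj⟩ :=
    exists_near_not_of_card_filter_le (P := fun j => t < |f j|) hk (not_lt.2 h0) hcard
  have hsteps : ((k - j : ℕ) : ℝ) * M ≤ D * M :=
    mul_le_mul_of_nonneg_right (by exact_mod_cast (by omega : k - j ≤ D)) hM
  have htail : ∑ i ∈ Finset.Ico j k, max (|f i - f (i + 1)| - M) 0 ≤ t :=
    (Finset.sum_le_sum_of_subset_of_nonneg
      (fun i hi => Finset.mem_range.2 ((Finset.mem_Ico.1 hi).2.trans_le hk))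
      fun i _ _ => le_max_right _ _).trans hexcess
  have := abs_sub_le_mul_add_sum_excess f M hjk
  have := abs_sub_abs_le_abs_sub (f k) (f j)
  linarith [not_lt.1 hj]

section Scales

variable {p c x : ℝ}

lemma floor_mul_rpow_mul_rpow_le (hc : 0 ≤ c) (hx : 0 < x) :
    ⌊c * x ^ (2 - p)⌋₊ * x ^ (p - 1) ≤ c * x := calc
  (⌊c * x ^ (2 - p)⌋₊ : ℝ) * x ^ (p - 1) ≤ c * x ^ (2 - p) * x ^ (p - 1) := by
    gcongr; exact Nat.floor_le (by positivity)
  _ = c * x := by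
    rw [mul_assoc, ← Real.rpow_add hx, show 2 - p + (p - 1) = 1 by ring, Real.rpow_one]

lemma sq_add_one_div_floor_add_one_le (hc : 0 < c) (hx : 1 ≤ x) :
    (x ^ 2 + 1) / (⌊c * x ^ (2 - p)⌋₊ + 1) ≤ 2 / c ^ (p + 1) * (c * x) ^ p := by
  have hx0 : 0 < x := one_pos.trans_le hx
  have hprod : (c * x) ^ p * (c * x ^ (2 - p)) = c ^ (p + 1) * x ^ 2 := by
    have hxx : x ^ p * x ^ (2 - p) = x ^ 2 := by
      rw [← Real.rpow_add hx0, add_sub_cancel, Real.rpow_two]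
    rw [Real.mul_rpow hc.le hx0.le, Real.rpow_add_one hc.ne', ← hxx]
    ring
  rw [div_le_iff₀ (by positivity)]
  calc x ^ 2 + 1 ≤ 2 / c ^ (p + 1) * ((c * x) ^ p * (c * x ^ (2 - p))) := by
        rw [hprod, ← mul_assoc, div_mul_cancel₀ _ (by positivity)]
        nlinarith
    _ ≤ 2 / c ^ (p + 1) * (c * x) ^ p * (⌊c * x ^ (2 - p)⌋₊ + 1) := by
        rw [mul_assoc]; gcongr; exact (Nat.lt_floor_add_one _).le

lemma sq_mul_rpow_conj_div_eq (hp : 1 < p) (hc : 0 < c) (hx : 0 < x) :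
    x ^ 2 * ((x ^ (p - 1)) ^ (1 - p / (p - 1)) / (p / (p - 1) - 1)) / (c * x) = (p - 1) / c := by
  have hp1 : p - 1 ≠ 0 := by linarith
  have hq1 : p / (p - 1) - 1 = 1 / (p - 1) := by rw [div_sub_one hp1]; ring_nf
  rw [← Real.rpow_mul hx.le, ← neg_sub (p / (p - 1)) 1, hq1, mul_neg, mul_one_div_cancel hp1,
    Real.rpow_neg_one]
  field_simp

end Scales

lemma ENNReal.le_ofReal_mul_of_ofReal_mul_le {x y : ℝ≥0∞} {c N K : ℝ} (hc : 0 < c)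
    (h : ENNReal.ofReal c * x ≤ ENNReal.ofReal N * y) (hN : N ≤ K * c) :
    x ≤ ENNReal.ofReal K * y := by
  refine (ENNReal.mul_le_mul_iff_right (ENNReal.ofReal_pos.2 hc).ne' ENNReal.ofReal_ne_top).1 ?_
  calc ENNReal.ofReal c * x ≤ ENNReal.ofReal N * y := h
    _ ≤ ENNReal.ofReal (K * c) * y := by gcongr
    _ = ENNReal.ofReal c * (ENNReal.ofReal K * y) := by
        rw [ENNReal.ofReal_mul' hc.le, mul_comm (ENNReal.ofReal K), mul_assoc]

lemma lintegral_Ioi_ofReal_add_rpow_neg {q M : ℝ} (hq : 1 < q) (hM : 0 < M) :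
    ∫⁻ s in Ioi 0, ENNReal.ofReal ((M + s) ^ (-q)) = ENNReal.ofReal (M ^ (1 - q) / (q - 1)) := by
  have hshift := (measurePreserving_add_left volume M).setLIntegral_comp_preimage_emb
    (measurableEmbedding_addLeft M) (fun x => ENNReal.ofReal (x ^ (-q))) (Ioi M)
  rw [preimage_const_add_Ioi, sub_self] at hshift
  rw [hshift, ← ofReal_integral_eq_lintegral_ofReal (integrableOn_Ioi_rpow_of_lt (by linarith) hM)
    ((ae_restrict_iff' measurableSet_Ioi).2 (ae_of_all _ fun x hx =>
      Real.rpow_nonneg (hM.trans hx).le _)), integral_Ioi_rpow_of_lt (by linarith) hM]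
  congr 1
  rw [show -q + 1 = -(q - 1) by ring, div_neg, neg_div, neg_neg, neg_sub]

lemma tendsto_iSup_ge_of_tendsto_zero {ι : Type*} {l : Filter ι} {b : ℝ → ℝ≥0∞}
    (hb : Tendsto b atTop (𝓝 0)) {M : ι → ℝ} (hM : Tendsto M l atTop) :
    Tendsto (fun i => ⨆ s ≥ M i, b s) l (𝓝 0) := by
  refine ENNReal.tendsto_nhds_zero.2 fun η hη => ?_
  obtain ⟨U, hU⟩ := eventually_atTop.1 (ENNReal.tendsto_nhds_zero.1 hb η hη)
  filter_upwards [hM.eventually_ge_atTop U] with i hi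
  exact iSup₂_le fun s hs => hU s (hi.trans hs)

section Birkhoff

variable {Ω : Type*} [MeasurableSpace Ω] {μ : Measure Ω} {T : Ω → Ω} {f : Ω → ℝ}

lemma measurable_partialSumT (hT : Measurable T) (hf : Measurable f) (n : ℕ) :
    Measurable (partialSumT T f n) :=
  Finset.measurable_sum _ fun j _ => hf.comp (hT.iterate j)

omit [MeasurableSpace Ω] in
open Classical in
lemma partialSumT_indicator_one (s : Set Ω) (n : ℕ) (ω : Ω) :
    partialSumT T (s.indicator 1) n ω = ((Finset.range n).filter fun j => T^[j] ω ∈ s).card := by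
  simp [partialSumT, Set.indicator_apply]

lemma lintegral_ofReal_partialSumT (hT : MeasurePreserving T μ μ) (hf : Measurable f)
    (hf0 : ∀ ω, 0 ≤ f ω) (n : ℕ) :
    ∫⁻ ω, ENNReal.ofReal (partialSumT T f n ω) ∂μ = n * ∫⁻ ω, ENNReal.ofReal (f ω) ∂μ := by
  have hf' : Measurable fun ω => ENNReal.ofReal (f ω) := hf.ennreal_ofReal
  simp_rw [partialSumT, ENNReal.ofReal_sum_of_nonneg fun j _ => hf0 _]
  rw [lintegral_finsetSum _ fun j _ =>
    show Measurable fun ω => ENNReal.ofReal (f (T^[j] ω)) from hf'.comp (hT.measurable.iterate j)]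
  simp_rw [(hT.iterate _).lintegral_comp hf']
  rw [Finset.sum_const, Finset.card_range, nsmul_eq_mul]

lemma mul_meas_le_partialSumT_le (hT : MeasurePreserving T μ μ) (hf : Measurable f)
    (hf0 : ∀ ω, 0 ≤ f ω) (n : ℕ) (c : ℝ) :
    ENNReal.ofReal c * μ {ω | c ≤ partialSumT T f n ω} ≤
      n * ∫⁻ ω, ENNReal.ofReal (f ω) ∂μ := by
  rw [← lintegral_ofReal_partialSumT hT hf hf0]
  refine le_trans ?_ (mul_meas_ge_le_lintegral₀
    (measurable_partialSumT hT.measurable hf n).ennreal_ofReal.aemeasurable (ENNReal.ofReal c))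
  gcongr
  exact ENNReal.ofReal_le_ofReal

lemma lintegral_ofReal_indicator_one {s : Set Ω} (hs : MeasurableSet s) :
    ∫⁻ ω, ENNReal.ofReal (s.indicator 1 ω) ∂μ = μ s := by
  rw [← lintegral_indicator_one hs]
  congr with ω
  by_cases h : ω ∈ s <;> simp [h]

lemma lintegral_ofReal_abs_sub_pos_le {h : Ω → ℝ} (hh : Measurable h) {q M : ℝ} (hq : 1 < q)
    (hM : 0 < M) {K : ℝ≥0∞}
    (hK : ∀ s, M ≤ s → ENNReal.ofReal (s ^ q) * μ {ω | s < |h ω|} ≤ K) :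
    ∫⁻ ω, ENNReal.ofReal (max (|h ω| - M) 0) ∂μ ≤ K * ENNReal.ofReal (M ^ (1 - q) / (q - 1)) := by
  rw [lintegral_eq_lintegral_meas_lt μ (f := fun ω => max (|h ω| - M) 0)
    (ae_of_all _ fun ω => le_max_right _ _)
    ((hh.abs.sub_const M).max measurable_const).aemeasurable,
    ← lintegral_Ioi_ofReal_add_rpow_neg hq hM,
    ← lintegral_const_mul _ ((measurable_const_add M).pow_const (-q)).ennreal_ofReal]
  refine setLIntegral_mono' measurableSet_Ioi fun s (hs : 0 < s) => ?_
  have hMs : 0 < M + s := by linarith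
  have hset : {ω | s < max (|h ω| - M) 0} = {ω | M + s < |h ω|} := by
    ext ω
    simp only [mem_ofPred_eq, lt_max_iff, not_lt_of_gt hs, or_false]
    constructor <;> intro <;> linarith
  rw [hset, Real.rpow_neg hMs.le, ENNReal.ofReal_inv_of_pos (by positivity),
    ← div_eq_mul_inv, ENNReal.le_div_iff_mul_le (Or.inl (by positivity))
      (Or.inl ENNReal.ofReal_ne_top), mul_comm]
  exact hK _ (by linarith)

end Birkhoff

section Maximal

variable {Ω : Type*} [MeasurableSpace Ω] {μ : Measure Ω} {T : Ω → Ω} {g : Ω → ℝ}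

lemma measure_exists_iterate_ge_le {t M c : ℝ} {n D : ℕ} (hM : 0 ≤ M)
    (hc : 2 * t + D * M < c) :
    μ {ω | ∃ k ≤ n, c ≤ |g (T^[k] ω)|} ≤
      μ {ω | t < |g ω|} + μ {ω | D + 1 ≤ partialSumT T ({ω | t < |g ω|}.indicator 1) (n + 1) ω}
        + μ {ω | t ≤ partialSumT T (fun ω => max (|g ω - g (T ω)| - M) 0) n ω} := by
  refine (measure_mono ?_).trans
    ((measure_union_le _ _).trans (add_le_add_left (measure_union_le _ _) _))
  rintro ω ⟨k, hk, hck⟩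
  by_contra hω
  simp only [mem_union, mem_ofPred_eq, not_or, not_lt, not_le] at hω
  obtain ⟨⟨h0, hcount⟩, hexcess⟩ := hω
  rw [partialSumT_indicator_one] at hcount
  have hcard : ((Finset.range (n + 1)).filter fun j => t < |g (T^[j] ω)|).card ≤ D := by
    exact_mod_cast Nat.lt_succ_iff.1 (by exact_mod_cast hcount)
  simp only [partialSumT, ← Function.iterate_succ_apply' T] at hexcess
  have := abs_le_of_card_filter_le_of_sum_excess_le (f := fun j => g (T^[j] ω)) hM hk h0 hcard
    hexcess.le
  linarith

lemma measure_le_partialSumT_indicator_le (hT : MeasurePreserving T μ μ) {s : Set Ω}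
    (hs : MeasurableSet s) (n D : ℕ) :
    μ {ω | D + 1 ≤ partialSumT T (s.indicator 1) (n + 1) ω} ≤
      ENNReal.ofReal ((n + 1) / (D + 1)) * μ s := by
  have hmarkov := mul_meas_le_partialSumT_le hT (measurable_one.indicator hs)
    (indicator_nonneg fun _ _ => zero_le_one) (n + 1) (D + 1)
  rw [lintegral_ofReal_indicator_one hs, ← ENNReal.ofReal_natCast, Nat.cast_succ] at hmarkov
  exact ENNReal.le_ofReal_mul_of_ofReal_mul_le (by positivity) hmarkov
    (div_mul_cancel₀ _ (by positivity)).ge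

lemma measure_le_partialSumT_excess_le (hT : MeasurePreserving T μ μ) {h : Ω → ℝ}
    (hh : Measurable h) {q M t : ℝ} (hq : 1 < q) (hM : 0 < M) (ht : 0 < t) (n : ℕ) :
    μ {ω | t ≤ partialSumT T (fun ω => max (|h ω| - M) 0) n ω} ≤
      ENNReal.ofReal (n * (M ^ (1 - q) / (q - 1)) / t) *
        ⨆ s ≥ M, ENNReal.ofReal (s ^ q) * μ {ω | s < |h ω|} := by
  have hmarkov := mul_meas_le_partialSumT_le hT ((hh.abs.sub_const M).max measurable_const)
    (fun _ => le_max_right _ _) n t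
  have htail := lintegral_ofReal_abs_sub_pos_le (μ := μ) hh hq hM
    (fun s hs => le_iSup₂ (f := fun s (_ : s ≥ M) => ENNReal.ofReal (s ^ q) * μ {ω | s < |h ω|})
      s hs)
  refine ENNReal.le_ofReal_mul_of_ofReal_mul_le ht ?_ (div_mul_cancel₀ _ ht.ne').ge
  calc ENNReal.ofReal t * _ ≤ n * ∫⁻ ω, ENNReal.ofReal (max (|h ω| - M) 0) ∂μ := hmarkov
    _ ≤ n * ((⨆ s ≥ M, ENNReal.ofReal (s ^ q) * μ {ω | s < |h ω|}) *
          ENNReal.ofReal (M ^ (1 - q) / (q - 1))) := by gcongr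
    _ = _ := by rw [ENNReal.ofReal_mul (Nat.cast_nonneg _), ENNReal.ofReal_natCast]; ring

lemma exists_measure_exists_iterate_ge_le (hT : MeasurePreserving T μ μ) (hg : Measurable g)
    {p ε : ℝ} (hp : 1 < p) (hε : 0 < ε) :
    ∃ K : ℝ≥0∞, K ≠ ∞ ∧ ∀ n : ℕ, 1 ≤ ε / 4 * √n →
      μ {ω | ∃ k ≤ n, ε * √n ≤ |g (T^[k] ω)|} ≤
        K * (ENNReal.ofReal ((ε / 4 * √n) ^ p) * μ {ω | ε / 4 * √n < |g ω|} +
          ⨆ s ≥ √n ^ (p - 1),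
            ENNReal.ofReal (s ^ (p / (p - 1))) * μ {ω | s < |g ω - g (T ω)|}) := by
  set K₁ := ENNReal.ofReal (2 / (ε / 4) ^ (p + 1))
  set K₂ := ENNReal.ofReal ((p - 1) / (ε / 4))
  refine ⟨1 + K₁ + K₂, by finiteness, fun n hn => ?_⟩
  set x := √(n : ℝ)
  set t := ε / 4 * x
  set a := ENNReal.ofReal (t ^ p) * μ {ω | t < |g ω|}
  set δ := ⨆ s ≥ x ^ (p - 1), ENNReal.ofReal (s ^ (p / (p - 1))) * μ {ω | s < |g ω - g (T ω)|}
  have hx : 0 < x := pos_of_mul_pos_right (one_pos.trans_le hn) (by positivity)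
  have hx1 : 1 ≤ x := Real.one_le_sqrt.2 (by
    exact_mod_cast Nat.one_le_iff_ne_zero.2 fun h0 => by simp [x, h0] at hx)
  have hnx : (n : ℝ) = x ^ 2 := (Real.sq_sqrt (Nat.cast_nonneg n)).symm
  have hC : μ {ω | t < |g ω|} ≤ a :=
    le_mul_of_one_le_left' (ENNReal.one_le_ofReal.2 (Real.one_le_rpow hn (by linarith)))
  have hA := measure_le_partialSumT_indicator_le hT
    (measurableSet_lt measurable_const hg.abs : MeasurableSet {ω | t < |g ω|}) n
    ⌊ε / 4 * x ^ (2 - p)⌋₊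
  have hB := measure_le_partialSumT_excess_le (q := p / (p - 1))
    (h := fun ω => g ω - g (T ω)) hT (hg.sub (hg.comp hT.measurable))
    ((one_lt_div (by linarith)).2 (by linarith)) (Real.rpow_pos_of_pos hx (p - 1))
    (one_pos.trans_le hn) n
  rw [hnx] at hA hB
  rw [sq_mul_rpow_conj_div_eq hp (by positivity) hx] at hB
  calc _ ≤ _ := measure_exists_iterate_ge_le (t := t) (M := x ^ (p - 1))
        (D := ⌊ε / 4 * x ^ (2 - p)⌋₊) (by positivity)
        (by linarith [floor_mul_rpow_mul_rpow_le (p := p) (by positivity : 0 ≤ ε / 4) hx,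
          show ε * x = 4 * t by ring])
    _ ≤ a + K₁ * a + K₂ * δ := by
        gcongr
        calc _ ≤ _ := hA
          _ ≤ ENNReal.ofReal (2 / (ε / 4) ^ (p + 1) * t ^ p) * μ {ω | t < |g ω|} := by
              gcongr; exact sq_add_one_div_floor_add_one_le (by positivity) hx1
          _ = K₁ * a := by rw [ENNReal.ofReal_mul (by positivity), mul_assoc]
    _ ≤ (1 + K₁ + K₂) * a + (1 + K₁ + K₂) * δ := by
        rw [← one_add_mul]
        exact add_le_add (mul_le_mul_left le_self_add a) (mul_le_mul_left le_add_self δ)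
    _ = _ := (mul_add _ _ _).symm

end Maximal

theorem stmt0_general {Ω : Type*} [MeasurableSpace Ω] (μ : Measure Ω)
    (T : Ω ≃ᵐ Ω) (hT : MeasurePreserving (⇑T) μ μ)
    (p : ℝ) (hp1 : 1 < p)
    (g : Ω → ℝ) (hg : Measurable g)
    (hgweak : Tendsto (fun t : ℝ => ENNReal.ofReal (t ^ p) * μ {ω | t < |g ω|})
      atTop (𝓝 0))
    (hcobweak : Tendsto
      (fun t : ℝ => ENNReal.ofReal (t ^ (p / (p - 1))) * μ {ω | t < |g ω - g (T ω)|})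
      atTop (𝓝 0)) :
    ∀ ε : ℝ, 0 < ε →
      Tendsto (fun n : ℕ =>
          μ {ω | ε ≤ ((((Finset.Icc 1 n).sup fun k => ‖g ((⇑T)^[k] ω)‖₊ : ℝ≥0)) : ℝ)
            / Real.sqrt n})
        atTop (𝓝 0) := by
  intro ε hε
  obtain ⟨K, hK, hbound⟩ := exists_measure_exists_iterate_ge_le hT hg hp1 hε
  have hsqrt : Tendsto (fun n : ℕ => √(n : ℝ)) atTop atTop :=
    Real.tendsto_sqrt_atTop.comp tendsto_natCast_atTop_atTop
  have ht : Tendsto (fun n : ℕ => ε / 4 * √(n : ℝ)) atTop atTop :=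
    hsqrt.const_mul_atTop (by positivity)
  have hlim := ENNReal.Tendsto.const_mul ((hgweak.comp ht).add (tendsto_iSup_ge_of_tendsto_zero
    hcobweak ((tendsto_rpow_atTop (by linarith : 0 < p - 1)).comp hsqrt))) (Or.inr hK)
  rw [add_zero, mul_zero] at hlim
  refine tendsto_of_tendsto_of_tendsto_of_le_of_le' tendsto_const_nhds hlim
    (Eventually.of_forall fun _ => zero_le) ?_
  filter_upwards [ht.eventually_ge_atTop 1] with n hn
  refine (measure_mono fun ω hω => ?_).trans (hbound n hn)
  have hx : 0 < √(n : ℝ) := pos_of_mul_pos_right (one_pos.trans_le hn) (by positivity)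
  have hn1 : (Finset.Icc 1 n).Nonempty :=
    Finset.nonempty_Icc.2 (Nat.one_le_iff_ne_zero.2 fun h0 => by simp [h0] at hx)
  obtain ⟨k, hk, hmax⟩ := Finset.exists_mem_eq_sup _ hn1 fun k => ‖g (T^[k] ω)‖₊
  rw [mem_ofPred_eq, le_div_iff₀ hx, hmax, coe_nnnorm, Real.norm_eq_abs] at hω
  exact ⟨k, (Finset.mem_Icc.1 hk).2, by linarith⟩

/-- **Theorem 2.1 (key conclusion)**: if `1 < p < 2`, `g ∈ 𝕃₀^{p,∞}` and
`g - g∘T ∈ 𝕃₀^{p/(p-1),∞}`, then `n^{-1/2} max_{1 ≤ k ≤ n} |g ∘ T^k| → 0` in probability. -/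
theorem stmt0 {Ω : Type*} [MeasurableSpace Ω] (μ : Measure Ω) [IsProbabilityMeasure μ]
    (T : Ω ≃ᵐ Ω) (hT : MeasurePreserving (⇑T) μ μ)
    (p : ℝ) (hp1 : 1 < p) (hp2 : p < 2)
    (g : Ω → ℝ) (hg : Measurable g)
    (hgweak : Tendsto (fun t : ℝ => ENNReal.ofReal (t ^ p) * μ {ω | t < |g ω|})
      atTop (𝓝 0))
    (hcobweak : Tendsto
      (fun t : ℝ => ENNReal.ofReal (t ^ (p / (p - 1))) * μ {ω | t < |g ω - g (T ω)|})
      atTop (𝓝 0)) :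
    ∀ ε : ℝ, 0 < ε →
      Tendsto (fun n : ℕ =>
          μ {ω | ε ≤ ((((Finset.Icc 1 n).sup fun k => ‖g ((⇑T)^[k] ω)‖₊ : ℝ≥0)) : ℝ)
            / Real.sqrt n})
        atTop (𝓝 0) :=
  stmt0_general μ T hT p hp1 g hg hgweak hcobweak
end
end

section
/- Let 1 < p < 2 < r with p > r/(r−1). Suppose g : Ω → ℝ is measurable with g ∈ 𝕃^{p,∞} and g − g∘T ∈ 𝕃^{r,∞}. Then (n log log n)^{-1/2} · g ∘ T^n → 0 μ-almost surely as n → ∞. (This is condition (1.7) of the equivalence theorem, from which the law of the iterated logarithm for f := m + g − g∘T follows for any square-integrable martingale differences sequence m.) -/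
/-!
The proof shows the stronger `g ∘ Tⁿ = o(√n)` almost surely. Along the sparse times
`N_k = ⌈(k+1)^β⌉`, the weak-`L^p` tail of `g` and Borel–Cantelli give
`|g ∘ T^{N_k}| ≤ ε (k+1)^{β/2}` eventually. Inside the block `[N_k, N_{k+1})`, `g ∘ Tⁿ` moves
from `g ∘ T^{N_k}` by at most the sum of `|g - g ∘ T| ∘ Tʲ` over the block; the weak-`L^r`
coboundary lies in `L^q` for `q < r`, so Markov's inequality in `L^q` and Borel–Cantelli control
this sum by the same threshold. Both series converge when `2/p < β < 2 - 2/q`; such `β ≥ 1` and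
`q < r` exist because `r > 2` and `r/(r-1) < p`, i.e. `1/p + 1/r < 1`.
-/

open MeasureTheory Filter Topology Set
open scoped ENNReal NNReal

open Finset in
theorem abs_le_abs_add_sum_abs_sub (x : ℕ → ℝ) {m n l : ℕ} (hmn : m ≤ n) (hnl : n ≤ l) :
    |x n| ≤ |x m| + ∑ j ∈ Ico m l, |x j - x (j + 1)| := by
  have htel : x n = x m + ∑ j ∈ Ico m n, (x (j + 1) - x j) := by
    rw [sum_Ico_sub x hmn]; ring
  calc |x n| ≤ |x m| + ∑ j ∈ Ico m n, |x (j + 1) - x j| := by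
        rw [htel]; exact (abs_add_le _ _).trans (by gcongr; exact abs_sum_le_sum_abs _ _)
    _ ≤ |x m| + ∑ j ∈ Ico m l, |x j - x (j + 1)| := by
        simp_rw [abs_sub_comm (x (_ + 1))]
        gcongr

theorem Filter.Eventually.of_blocks {N : ℕ → ℕ} (hN : Monotone N)
    (hN' : Tendsto N atTop atTop) {P : ℕ → Prop}
    (h : ∀ᶠ k in atTop, ∀ n ∈ Set.Ico (N k) (N (k + 1)), P n) : ∀ᶠ n in atTop, P n := by
  obtain ⟨K, hK⟩ := eventually_atTop.1 h
  filter_upwards [eventually_ge_atTop (N K)] with n hn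
  have hex : ∃ k, n < N k := (hN'.eventually_gt_atTop n).exists
  have hK_lt : K < Nat.find hex := by
    by_contra! hle
    exact (Nat.find_spec hex).not_ge (hn.trans' (hN hle))
  obtain ⟨k, hk⟩ : ∃ k, Nat.find hex = k + 1 := Nat.exists_eq_add_one_of_ne_zero (by omega)
  refine hK k (by omega) n ⟨not_lt.1 (Nat.find_min hex (by omega)), ?_⟩
  rw [← hk]
  exact Nat.find_spec hex

theorem Real.mul_rpow_rpow_neg {c x : ℝ} (hc : 0 ≤ c) (hx : 0 ≤ x) (a z : ℝ) :
    (c * x ^ a) ^ (-z) = c ^ (-z) * x ^ (-(a * z)) := by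
  rw [Real.mul_rpow hc (Real.rpow_nonneg hx a), ← Real.rpow_mul hx, mul_neg]

noncomputable def blockStart (β : ℝ) (k : ℕ) : ℕ := ⌈((k : ℝ) + 1) ^ β⌉₊

theorem le_blockStart (β : ℝ) (k : ℕ) : ((k : ℝ) + 1) ^ β ≤ blockStart β k := Nat.le_ceil _

theorem blockStart_mono {β : ℝ} (hβ : 0 ≤ β) : Monotone (blockStart β) := fun k l hkl =>
  Nat.ceil_mono (Real.rpow_le_rpow (by positivity) (by gcongr) hβ)

theorem tendsto_blockStart {β : ℝ} (hβ : 0 < β) : Tendsto (blockStart β) atTop atTop :=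
  tendsto_nat_ceil_atTop.comp <| (tendsto_rpow_atTop hβ).comp <|
    tendsto_atTop_add_const_right _ 1 tendsto_natCast_atTop_atTop

theorem add_one_rpow_le {x β : ℝ} (hx : 1 ≤ x) (hβ : β ≤ 2) :
    (x + 1) ^ β ≤ x ^ β + 3 * x ^ (β - 1) := by
  have hx0 : 0 < x := by linarith
  have hfac : x + 1 = x * (1 + x⁻¹) := by field_simp
  have hsq : (1 + x⁻¹) ^ β ≤ 1 + 3 * x⁻¹ := by
    have : x⁻¹ ^ 2 ≤ x⁻¹ := by
      rw [sq]; exact mul_le_of_le_one_left (by positivity) (inv_le_one_of_one_le₀ hx)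
    calc (1 + x⁻¹) ^ β ≤ (1 + x⁻¹) ^ (2 : ℝ) :=
          Real.rpow_le_rpow_of_exponent_le (by simp; positivity) hβ
      _ ≤ 1 + 3 * x⁻¹ := by rw [Real.rpow_two]; nlinarith
  calc (x + 1) ^ β = x ^ β * (1 + x⁻¹) ^ β := by rw [hfac, Real.mul_rpow hx0.le (by positivity)]
    _ ≤ x ^ β * (1 + 3 * x⁻¹) := by gcongr
    _ = x ^ β + 3 * x ^ (β - 1) := by rw [Real.rpow_sub_one hx0.ne']; ring

theorem blockStart_succ_sub_le {β : ℝ} (hβ1 : 1 ≤ β) (hβ2 : β ≤ 2) (k : ℕ) :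
    ((blockStart β (k + 1) - blockStart β k : ℕ) : ℝ) ≤ 4 * ((k : ℝ) + 1) ^ (β - 1) := by
  have hx : (1 : ℝ) ≤ (k : ℝ) + 1 := by simp
  have hupper : (blockStart β (k + 1) : ℝ) < ((k : ℝ) + 1 + 1) ^ β + 1 := by
    unfold blockStart
    push_cast
    exact Nat.ceil_lt_add_one (by positivity)
  have hone : 1 ≤ ((k : ℝ) + 1) ^ (β - 1) := Real.one_le_rpow hx (by linarith)
  rw [Nat.cast_sub (blockStart_mono (by linarith) k.le_succ)]
  linarith [le_blockStart β k, add_one_rpow_le hx hβ2]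

theorem exists_block_exponents {p r : ℝ} (hr : 2 < r) (hpr : r / (r - 1) < p) :
    ∃ β q : ℝ, 1 ≤ β ∧ β ≤ 2 ∧ 1 ≤ q ∧ q < r ∧ 1 < β / 2 * p ∧ 1 < q * (1 - β / 2) := by
  have hr1 : 0 < r - 1 := by linarith
  have hp : 1 < p := ((one_lt_div hr1).2 (by linarith)).trans hpr
  have hp1 : 0 < p - 1 := by linarith
  have hconj : p / (p - 1) < r := by
    rw [div_lt_iff₀ hr1] at hpr
    rw [div_lt_iff₀ hp1]
    linarith
  obtain ⟨q, hq, hqr⟩ := exists_between (max_lt (by linarith) hconj : max 2 (p / (p - 1)) < r)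
  have hq2 : 2 < q := (le_max_left _ _).trans_lt hq
  have hpq : 2 / p < 2 - 2 / q := by
    have : p / (p - 1) < q := (le_max_right _ _).trans_lt hq
    rw [div_lt_iff₀ hp1] at this
    rw [div_lt_iff₀ (by linarith), sub_mul, div_mul_eq_mul_div, lt_sub_iff_add_lt]
    have : 2 * p / q < 2 * p - 2 := by rw [div_lt_iff₀ (by linarith)]; linarith
    linarith
  have hq1 : 1 < 2 - 2 / q := by
    have : 2 / q < 1 := (div_lt_one (by linarith)).2 hq2
    linarith
  obtain ⟨β, hβ, hβq⟩ := exists_between (max_lt hq1 hpq)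
  refine ⟨β, q, (le_max_left _ _).trans hβ.le, ?_, by linarith, hqr, ?_, ?_⟩
  · linarith [div_pos two_pos (by linarith : (0 : ℝ) < q)]
  · have := (le_max_right _ _).trans_lt hβ
    rw [div_lt_iff₀ (by linarith)] at this
    linarith
  · have : 2 / q < 2 - β := by linarith
    rw [div_lt_iff₀ (by linarith)] at this
    linarith

section

variable {Ω : Type*} [MeasurableSpace Ω] {μ : Measure Ω}

theorem measure_abs_gt_le_of_weak {f : Ω → ℝ} {p : ℝ} {C : ℝ≥0}
    (hC : ∀ t : ℝ, 0 < t → ENNReal.ofReal (t ^ p) * μ {ω | t < |f ω|} ≤ C) {t : ℝ} (ht : 0 < t) :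
    μ {ω | t < |f ω|} ≤ C * ENNReal.ofReal (t ^ (-p)) := calc
  μ {ω | t < |f ω|} = ENNReal.ofReal (t ^ (-p)) * (ENNReal.ofReal (t ^ p) * μ {ω | t < |f ω|}) := by
      rw [← mul_assoc, ← ENNReal.ofReal_mul (by positivity), ← Real.rpow_add ht, neg_add_cancel,
        Real.rpow_zero, ENNReal.ofReal_one, one_mul]
  _ ≤ ENNReal.ofReal (t ^ (-p)) * C := by gcongr; exact hC t ht
  _ = C * ENNReal.ofReal (t ^ (-p)) := mul_comm _ _

theorem memLp_of_weak [IsFiniteMeasure μ] {f : Ω → ℝ} (hf : AEMeasurable f μ) {q r : ℝ}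
    (hq : 0 < q) (hqr : q < r) {C : ℝ≥0}
    (hC : ∀ t : ℝ, 0 < t → ENNReal.ofReal (t ^ r) * μ {ω | t < |f ω|} ≤ C) :
    MemLp f (ENNReal.ofReal q) μ := by
  refine ⟨hf.aestronglyMeasurable, (eLpNorm_lt_top_iff_lintegral_rpow_enorm_lt_top
    (by simpa using hq) ENNReal.ofReal_ne_top).2 ?_⟩
  have hlayer : ∫⁻ ω, ‖f ω‖ₑ ^ (ENNReal.ofReal q).toReal ∂μ =
      ENNReal.ofReal q * ∫⁻ t in Ioi 0, μ {ω | t < |f ω|} * ENNReal.ofReal (t ^ (q - 1)) := by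
    rw [ENNReal.toReal_ofReal hq.le, ← lintegral_rpow_eq_lintegral_meas_lt_mul μ
      (ae_of_all _ fun _ => abs_nonneg _) hf.abs hq]
    refine lintegral_congr fun ω => ?_
    rw [Real.enorm_eq_ofReal_abs, ENNReal.ofReal_rpow_of_nonneg (abs_nonneg _) hq.le]
  rw [hlayer, ← Ioc_union_Ioi_eq_Ioi zero_le_one,
    lintegral_union measurableSet_Ioi (Ioc_disjoint_Ioi le_rfl)]
  refine ENNReal.mul_lt_top ENNReal.ofReal_lt_top (ENNReal.add_lt_top.2 ⟨?_, ?_⟩)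
  · have hint : IntegrableOn (fun t : ℝ => t ^ (q - 1)) (Ioc 0 1) :=
      (intervalIntegral.intervalIntegrable_rpow' (by linarith)).1
    calc _ ≤ ∫⁻ t in Ioc 0 1, μ univ * ENNReal.ofReal (t ^ (q - 1)) :=
          setLIntegral_mono' measurableSet_Ioc fun t _ => by gcongr; exact subset_univ _
      _ < ∞ := by
          rw [lintegral_const_mul' _ _ (measure_ne_top _ _)]
          exact ENNReal.mul_lt_top (measure_lt_top _ _) hint.lintegral_lt_top
  · have hint : IntegrableOn (fun t : ℝ => t ^ (-r) * t ^ (q - 1)) (Ioi 1) :=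
      (integrableOn_Ioi_rpow_of_lt (by linarith : -r + (q - 1) < -1) one_pos).congr_fun
        (fun t ht => Real.rpow_add (zero_lt_one.trans ht) _ _) measurableSet_Ioi
    calc _ ≤ ∫⁻ t in Ioi 1, C * ENNReal.ofReal (t ^ (-r) * t ^ (q - 1)) :=
          setLIntegral_mono' measurableSet_Ioi fun t ht => by
            have ht0 : 0 < t := zero_lt_one.trans ht
            rw [ENNReal.ofReal_mul (by positivity), ← mul_assoc]
            gcongr
            exact measure_abs_gt_le_of_weak hC ht0
      _ < ∞ := by
          rw [lintegral_const_mul' _ _ ENNReal.coe_ne_top]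
          exact ENNReal.mul_lt_top ENNReal.coe_lt_top hint.lintegral_lt_top

theorem eLpNorm_sum_abs_comp_iterate_le {f : Ω → Ω} (hf : MeasurePreserving f μ μ) {h : Ω → ℝ}
    (hh : AEStronglyMeasurable h μ) {p : ℝ≥0∞} (hp : 1 ≤ p) (s : Finset ℕ) :
    eLpNorm (fun ω => ∑ j ∈ s, |h (f^[j] ω)|) p μ ≤ s.card * eLpNorm h p μ := by
  have hterm (j : ℕ) : eLpNorm (fun ω => |h (f^[j] ω)|) p μ = eLpNorm h p μ := by
    rw [← eLpNorm_norm h, ← eLpNorm_comp_measurePreserving hh.norm (hf.iterate j)]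
    rfl
  calc eLpNorm (fun ω => ∑ j ∈ s, |h (f^[j] ω)|) p μ
      = eLpNorm (∑ j ∈ s, fun ω => |h (f^[j] ω)|) p μ := by
        congr 1; ext ω; simp only [Finset.sum_apply]
    _ ≤ ∑ j ∈ s, eLpNorm (fun ω => |h (f^[j] ω)|) p μ :=
        eLpNorm_sum_le (fun j _ => (hh.comp_measurePreserving (hf.iterate j)).norm) hp
    _ = s.card * eLpNorm h p μ := by simp only [hterm, Finset.sum_const, nsmul_eq_mul]

theorem measure_ge_le_rpow_neg_mul_eLpNorm {D : Ω → ℝ} (hD : AEStronglyMeasurable D μ)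
    {q t : ℝ} (hq : 0 < q) (ht : 0 < t) :
    μ {ω | t ≤ D ω} ≤ ENNReal.ofReal (t ^ (-q)) * eLpNorm D (ENNReal.ofReal q) μ ^ q := by
  have hsub : {ω | t ≤ D ω} ⊆ {ω | ENNReal.ofReal t ≤ ‖D ω‖ₑ} := fun ω hω => by
    rw [mem_ofPred_eq, Real.enorm_eq_ofReal_abs]
    exact ENNReal.ofReal_le_ofReal (hω.out.trans (le_abs_self _))
  refine (measure_mono hsub).trans ?_
  refine (meas_ge_le_mul_pow_eLpNorm_enorm μ (by simpa using hq) ENNReal.ofReal_ne_top hD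
    (ENNReal.ofReal_ne_zero_iff.2 ht) (by simp)).trans_eq ?_
  rw [ENNReal.toReal_ofReal hq.le, ← ENNReal.ofReal_inv_of_pos ht,
    ENNReal.ofReal_rpow_of_pos (inv_pos.2 ht), Real.inv_rpow ht.le, Real.rpow_neg ht.le]

theorem measure_ge_sum_abs_comp_iterate_le {f : Ω → Ω} (hf : MeasurePreserving f μ μ)
    {h : Ω → ℝ} (hh : AEStronglyMeasurable h μ) {q t : ℝ} (hq : 1 ≤ q) (ht : 0 < t)
    (s : Finset ℕ) :
    μ {ω | t ≤ ∑ j ∈ s, |h (f^[j] ω)|} ≤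
      ENNReal.ofReal (t ^ (-q) * (s.card : ℝ) ^ q) * eLpNorm h (ENNReal.ofReal q) μ ^ q := by
  have hD : AEStronglyMeasurable (fun ω => ∑ j ∈ s, |h (f^[j] ω)|) μ :=
    Finset.aestronglyMeasurable_fun_sum _ fun j _ => (hh.comp_measurePreserving (hf.iterate j)).norm
  calc _ ≤ ENNReal.ofReal (t ^ (-q)) *
        eLpNorm (fun ω => ∑ j ∈ s, |h (f^[j] ω)|) (ENNReal.ofReal q) μ ^ q :=
        measure_ge_le_rpow_neg_mul_eLpNorm hD (by linarith) ht
    _ ≤ ENNReal.ofReal (t ^ (-q)) * (s.card * eLpNorm h (ENNReal.ofReal q) μ) ^ q := by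
        gcongr
        exact eLpNorm_sum_abs_comp_iterate_le hf hh (by simpa using hq) s
    _ = _ := by
        rw [ENNReal.mul_rpow_of_nonneg _ _ (by linarith), ← mul_assoc, ENNReal.ofReal_mul
          (by positivity), ← ENNReal.ofReal_natCast, ENNReal.ofReal_rpow_of_nonneg (by positivity)
          (by linarith)]

theorem ae_eventually_notMem_of_measure_le_rpow {s : ℕ → Set Ω} {C : ℝ≥0∞} (hC : C ≠ ∞)
    {a : ℝ} (ha : 1 < a) (hs : ∀ k, μ (s k) ≤ C * ENNReal.ofReal (((k : ℝ) + 1) ^ (-a))) :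
    ∀ᵐ ω ∂μ, ∀ᶠ k in atTop, ω ∉ s k := by
  have hsum : Summable fun k : ℕ => ((k : ℝ) + 1) ^ (-a) :=
    ((Real.summable_one_div_nat_add_rpow 1 a).2 ha).congr fun k => by
      rw [abs_of_pos (by positivity), Real.rpow_neg (by positivity), one_div]
  refine ae_eventually_notMem (ne_top_of_le_ne_top ?_ (ENNReal.tsum_le_tsum hs))
  rw [ENNReal.tsum_mul_left, ← ENNReal.ofReal_tsum_of_nonneg (fun k => by positivity) hsum]
  exact ENNReal.mul_ne_top hC ENNReal.ofReal_ne_top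

theorem ae_eventually_abs_comp_iterate_blockStart_le {f : Ω → Ω} (hf : MeasurePreserving f μ μ)
    {g : Ω → ℝ} (hg : Measurable g) {p β : ℝ} (hβp : 1 < β / 2 * p) {C : ℝ≥0}
    (hC : ∀ t : ℝ, 0 < t → ENNReal.ofReal (t ^ p) * μ {ω | t < |g ω|} ≤ C) {c : ℝ} (hc : 0 < c) :
    ∀ᵐ ω ∂μ, ∀ᶠ k in atTop, |g (f^[blockStart β k] ω)| ≤ c * ((k : ℝ) + 1) ^ (β / 2) := by
  have hbound (k : ℕ) : μ {ω | c * ((k : ℝ) + 1) ^ (β / 2) < |g (f^[blockStart β k] ω)|} ≤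
      C * ENNReal.ofReal (c ^ (-p)) * ENNReal.ofReal (((k : ℝ) + 1) ^ (-(β / 2 * p))) := by
    rw [show {ω | c * ((k : ℝ) + 1) ^ (β / 2) < |g (f^[blockStart β k] ω)|} =
        f^[blockStart β k] ⁻¹' {ω | c * ((k : ℝ) + 1) ^ (β / 2) < |g ω|} from rfl,
      (hf.iterate _).measure_preimage (measurableSet_lt measurable_const hg.abs).nullMeasurableSet]
    refine (measure_abs_gt_le_of_weak hC (by positivity)).trans_eq ?_
    rw [Real.mul_rpow_rpow_neg hc.le (by positivity), ENNReal.ofReal_mul (by positivity), mul_assoc]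
  filter_upwards [ae_eventually_notMem_of_measure_le_rpow (by finiteness) hβp hbound] with ω hω
  exact hω.mono fun k hk => not_lt.1 hk

theorem ae_eventually_sum_abs_comp_iterate_block_lt {f : Ω → Ω} (hf : MeasurePreserving f μ μ)
    {h : Ω → ℝ} {q β : ℝ} (hh : MemLp h (ENNReal.ofReal q) μ) (hq : 1 ≤ q) (hβ1 : 1 ≤ β)
    (hβ2 : β ≤ 2) (hβq : 1 < q * (1 - β / 2)) {c : ℝ} (hc : 0 < c) :
    ∀ᵐ ω ∂μ, ∀ᶠ k in atTop, ∑ j ∈ Finset.Ico (blockStart β k) (blockStart β (k + 1)),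
      |h (f^[j] ω)| < c * ((k : ℝ) + 1) ^ (β / 2) := by
  have hbound (k : ℕ) : μ {ω | c * ((k : ℝ) + 1) ^ (β / 2) ≤
        ∑ j ∈ Finset.Ico (blockStart β k) (blockStart β (k + 1)), |h (f^[j] ω)|} ≤
      ENNReal.ofReal (c ^ (-q) * 4 ^ q) * eLpNorm h (ENNReal.ofReal q) μ ^ q *
        ENNReal.ofReal (((k : ℝ) + 1) ^ (-(q * (1 - β / 2)))) := by
    refine (measure_ge_sum_abs_comp_iterate_le hf hh.aestronglyMeasurable hq (by positivity)
      _).trans ?_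
    rw [mul_right_comm, ← ENNReal.ofReal_mul (by positivity)]
    gcongr ?_ * _
    refine ENNReal.ofReal_le_ofReal ?_
    have hx : (0 : ℝ) < (k : ℝ) + 1 := by positivity
    calc (c * ((k : ℝ) + 1) ^ (β / 2)) ^ (-q) *
          ((Finset.Ico (blockStart β k) (blockStart β (k + 1))).card : ℝ) ^ q
        ≤ c ^ (-q) * ((k : ℝ) + 1) ^ (-(β / 2 * q)) * (4 * ((k : ℝ) + 1) ^ (β - 1)) ^ q := by
          rw [Real.mul_rpow_rpow_neg hc.le hx.le, Nat.card_Ico]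
          gcongr
          exact blockStart_succ_sub_le hβ1 hβ2 k
      _ = c ^ (-q) * 4 ^ q * (((k : ℝ) + 1) ^ (-(β / 2 * q)) * ((k : ℝ) + 1) ^ ((β - 1) * q)) := by
          rw [Real.mul_rpow (by norm_num) (by positivity), ← Real.rpow_mul hx.le]
          ring
      _ = c ^ (-q) * 4 ^ q * ((k : ℝ) + 1) ^ (-(q * (1 - β / 2))) := by
          rw [← Real.rpow_add hx]
          ring_nf
  have hC : ENNReal.ofReal (c ^ (-q) * 4 ^ q) * eLpNorm h (ENNReal.ofReal q) μ ^ q ≠ ∞ := by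
    have := hh.eLpNorm_lt_top
    finiteness
  filter_upwards [ae_eventually_notMem_of_measure_le_rpow hC hβq hbound] with ω hω
  exact hω.mono fun k hk => not_le.1 hk

theorem ae_eventually_abs_comp_iterate_le_mul_sqrt [IsFiniteMeasure μ] {f : Ω → Ω}
    (hf : MeasurePreserving f μ μ) {g : Ω → ℝ} (hg : Measurable g) {p r : ℝ} (hr : 2 < r)
    (hpr : r / (r - 1) < p) {Cg Ch : ℝ≥0}
    (hCg : ∀ t : ℝ, 0 < t → ENNReal.ofReal (t ^ p) * μ {ω | t < |g ω|} ≤ Cg)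
    (hCh : ∀ t : ℝ, 0 < t → ENNReal.ofReal (t ^ r) * μ {ω | t < |g ω - g (f ω)|} ≤ Ch)
    {ε : ℝ} (hε : 0 < ε) :
    ∀ᵐ ω ∂μ, ∀ᶠ n in atTop, |g (f^[n] ω)| ≤ ε * √n := by
  obtain ⟨β, q, hβ1, hβ2, hq1, hqr, hβp, hβq⟩ := exists_block_exponents hr hpr
  have hcob : MemLp (fun ω => g ω - g (f ω)) (ENNReal.ofReal q) μ :=
    memLp_of_weak (hg.sub (hg.comp hf.measurable)).aemeasurable (by linarith) hqr hCh
  filter_upwards [ae_eventually_abs_comp_iterate_blockStart_le hf hg hβp hCg (half_pos hε),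
    ae_eventually_sum_abs_comp_iterate_block_lt hf hcob hq1 hβ1 hβ2 hβq (half_pos hε)]
    with ω hstart hblock
  refine Eventually.of_blocks (blockStart_mono (β := β) (by linarith))
    (tendsto_blockStart (by linarith)) ((hstart.and hblock).mono fun k hk n hn => ?_)
  calc |g (f^[n] ω)|
      ≤ |g (f^[blockStart β k] ω)| + ∑ j ∈ Finset.Ico (blockStart β k) (blockStart β (k + 1)),
          |g (f^[j] ω) - g (f (f^[j] ω))| := by
        simpa only [Function.iterate_succ_apply'] using
          abs_le_abs_add_sum_abs_sub (fun j => g (f^[j] ω)) hn.1 hn.2.le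
    _ ≤ ε * √(((k : ℝ) + 1) ^ β) := by
        rw [Real.sqrt_eq_rpow, ← Real.rpow_mul (by positivity), mul_one_div]
        linarith [hk.1, hk.2]
    _ ≤ ε * √n := by
        gcongr
        exact (le_blockStart β k).trans (by exact_mod_cast hn.1)

theorem ae_tendsto_comp_iterate_div_sqrt [IsFiniteMeasure μ] {f : Ω → Ω}
    (hf : MeasurePreserving f μ μ) {g : Ω → ℝ} (hg : Measurable g) {p r : ℝ} (hr : 2 < r)
    (hpr : r / (r - 1) < p) {Cg Ch : ℝ≥0}
    (hCg : ∀ t : ℝ, 0 < t → ENNReal.ofReal (t ^ p) * μ {ω | t < |g ω|} ≤ Cg)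
    (hCh : ∀ t : ℝ, 0 < t → ENNReal.ofReal (t ^ r) * μ {ω | t < |g ω - g (f ω)|} ≤ Ch) :
    ∀ᵐ ω ∂μ, Tendsto (fun n : ℕ => g (f^[n] ω) / √n) atTop (𝓝 0) := by
  have hall : ∀ᵐ ω ∂μ, ∀ m : ℕ, ∀ᶠ n in atTop, |g (f^[n] ω)| ≤ 1 / ((m : ℝ) + 1) * √n :=
    ae_all_iff.2 fun m =>
      ae_eventually_abs_comp_iterate_le_mul_sqrt hf hg hr hpr hCg hCh (by positivity)
  filter_upwards [hall] with ω hω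
  refine NormedAddGroup.tendsto_nhds_zero.2 fun ε hε => ?_
  obtain ⟨m, hm⟩ := exists_nat_one_div_lt hε
  filter_upwards [hω m] with n hn
  rw [Real.norm_eq_abs, abs_div, abs_of_nonneg (Real.sqrt_nonneg _)]
  exact (div_le_of_le_mul₀ (Real.sqrt_nonneg _) (by positivity) hn).trans_lt hm

end

theorem stmt1_general {Ω : Type*} [MeasurableSpace Ω] (μ : Measure Ω) [IsProbabilityMeasure μ]
    (T : Ω ≃ᵐ Ω) (hT : MeasurePreserving (⇑T) μ μ)
    (p r : ℝ) (hr : 2 < r) (hpr : r / (r - 1) < p)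
    (g : Ω → ℝ) (hg : Measurable g)
    (hgweak : ∃ C : ℝ≥0, ∀ t : ℝ, 0 < t →
      ENNReal.ofReal (t ^ p) * μ {ω | t < |g ω|} ≤ C)
    (hcobweak : ∃ C : ℝ≥0, ∀ t : ℝ, 0 < t →
      ENNReal.ofReal (t ^ r) * μ {ω | t < |g ω - g (T ω)|} ≤ C) :
    ∀ᵐ ω ∂μ, Tendsto
      (fun n : ℕ => g ((⇑T)^[n] ω) / Real.sqrt (n * Real.log (Real.log n)))
      atTop (𝓝 0) := by
  obtain ⟨Cg, hCg⟩ := hgweak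
  obtain ⟨Ch, hCh⟩ := hcobweak
  have hloglog : ∀ᶠ n : ℕ in atTop, 1 ≤ Real.log (Real.log n) :=
    (Real.tendsto_log_atTop.comp (Real.tendsto_log_atTop.comp tendsto_natCast_atTop_atTop))
      |>.eventually_ge_atTop 1
  filter_upwards [ae_tendsto_comp_iterate_div_sqrt hT hg hr hpr hCg hCh] with ω hω
  refine squeeze_zero_norm' ?_ (tendsto_zero_iff_norm_tendsto_zero.1 hω)
  filter_upwards [hloglog] with n hn
  rw [Real.sqrt_mul' _ (by linarith), ← div_div, norm_div,
    Real.norm_of_nonneg (Real.sqrt_nonneg _)]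
  exact div_le_self (norm_nonneg _) (Real.one_le_sqrt.2 hn)

/-- **Theorem 2.4 (i), key conclusion**: if `1 < p < 2 < r`, `p > r/(r-1)`, `g ∈ 𝕃^{p,∞}` and
`g - g∘T ∈ 𝕃^{r,∞}`, then `(n log log n)^{-1/2} g ∘ T^n → 0` almost surely. -/
theorem stmt1 {Ω : Type*} [MeasurableSpace Ω] (μ : Measure Ω) [IsProbabilityMeasure μ]
    (T : Ω ≃ᵐ Ω) (hT : MeasurePreserving (⇑T) μ μ)
    (p r : ℝ) (hp1 : 1 < p) (hp2 : p < 2) (hr : 2 < r) (hpr : r / (r - 1) < p)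
    (g : Ω → ℝ) (hg : Measurable g)
    (hgweak : ∃ C : ℝ≥0, ∀ t : ℝ, 0 < t →
      ENNReal.ofReal (t ^ p) * μ {ω | t < |g ω|} ≤ C)
    (hcobweak : ∃ C : ℝ≥0, ∀ t : ℝ, 0 < t →
      ENNReal.ofReal (t ^ r) * μ {ω | t < |g ω - g (T ω)|} ≤ C) :
    ∀ᵐ ω ∂μ, Tendsto
      (fun n : ℕ => g ((⇑T)^[n] ω) / Real.sqrt (n * Real.log (Real.log n)))
      atTop (𝓝 0) :=
  stmt1_general μ T hT p r hr hpr g hg hgweak hcobweak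
end

section
/- Let 1 < p < 2 < r with p = r/(r−1). Suppose g : Ω → ℝ satisfies g ∈ 𝕃^p(μ) and g − g∘T ∈ 𝕃^r(μ). Then (n log log n)^{-1/2} · g ∘ T^n → 0 μ-almost surely as n → ∞. -/
open MeasureTheory Filter Topology
open scoped ENNReal NNReal

noncomputable section

/-!
Cut time into dyadic blocks `[2^s, 2^(s+1))` and each block into about `2^(sp/2)` windows of
length `L ≈ 2^(s(1-p/2))`. Along a window, `g ∘ T^n` moves by at most the sum of the increments
`|h| ∘ T^j`, `h = g - g ∘ T`; those below `K ≈ ε 2^(s(p-1)/2)` contribute at most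
`L K ≈ ε 2^(s/2)`. So `|g ∘ T^n| > ε 2^(s/2)` somewhere in the block forces, in some window,
either a large value of `|g|` at its start or a large sum of big increments. By invariance and
Markov's inequality these have probability `≲ 2^(sp/2) μ(|g| ≳ ε 2^(s/2))` and
`≲ 2^(s/2) ∫_{|h| ≥ K} |h|`, which are summable in `s` against `∫ |g|^p` and `∫ |h|^r`
respectively, the latter precisely because `(p-1)(r-1) = 1`. Borel–Cantelli then gives
`g ∘ T^n = o(√n)` almost surely.
-/

namespace Coboundary

open Finset

lemma abs_le_add_indicator {K : ℝ} (hK : 0 ≤ K) (y : ℝ) :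
    |y| ≤ K + {y : ℝ | K ≤ |y|}.indicator abs y := by
  by_cases hy : K ≤ |y|
  · simp [Set.indicator_of_mem (show y ∈ {y : ℝ | K ≤ |y|} from hy), hK]
  · simp [Set.indicator_of_notMem (show y ∉ {y : ℝ | K ≤ |y|} from hy)]
    linarith [not_le.1 hy]

lemma abs_le_abs_add_window (u : ℕ → ℝ) {b L n : ℕ} (hbn : b ≤ n) (hnL : n < b + L)
    {K : ℝ} (hK : 0 ≤ K) :
    |u n| ≤ |u b| + L * K +
      ∑ j ∈ range L, {y : ℝ | K ≤ |y|}.indicator abs (u (b + j) - u (b + j + 1)) := by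
  have hpath : dist (u b) (u n) ≤ ∑ j ∈ range L, |u (b + j) - u (b + j + 1)| :=
    calc dist (u b) (u n) ≤ ∑ j ∈ Ico b n, dist (u j) (u (j + 1)) := dist_le_Ico_sum_dist u hbn
      _ ≤ ∑ j ∈ Ico b (b + L), dist (u j) (u (j + 1)) :=
        sum_le_sum_of_subset_of_nonneg (Ico_subset_Ico_right hnL.le)
          fun _ _ _ => dist_nonneg
      _ = ∑ j ∈ range L, |u (b + j) - u (b + j + 1)| := by
        simp [sum_Ico_eq_sum_range, Real.dist_eq, add_assoc]
  have htrunc : ∑ j ∈ range L, |u (b + j) - u (b + j + 1)| ≤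
      L * K + ∑ j ∈ range L, {y : ℝ | K ≤ |y|}.indicator abs (u (b + j) - u (b + j + 1)) := by
    calc ∑ j ∈ range L, |u (b + j) - u (b + j + 1)|
        ≤ ∑ j ∈ range L, (K + {y : ℝ | K ≤ |y|}.indicator abs (u (b + j) - u (b + j + 1))) :=
          sum_le_sum fun j _ => abs_le_add_indicator hK _
      _ = _ := by simp [sum_add_distrib]
  rw [Real.dist_eq] at hpath
  linarith [abs_sub_abs_le_abs_sub (u n) (u b), abs_sub_comm (u b) (u n)]

lemma geom_sum_le_of_le_rpow {γ δ a : ℝ} (hγ : 1 < γ) (hδ : 0 ≤ δ) (hγδ : γ ≤ δ ^ a) (S : ℕ) :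
    ∑ s ∈ range (S + 1), γ ^ s ≤ γ / (γ - 1) * (δ ^ S) ^ a := by
  have hγS : γ ^ S ≤ (δ ^ S) ^ a := by
    calc γ ^ S ≤ (δ ^ a) ^ S := pow_le_pow_left₀ (by linarith) hγδ S
      _ = (δ ^ S) ^ a := Real.rpow_pow_comm hδ a S
  rw [geom_sum_eq hγ.ne', div_mul_eq_mul_div]
  gcongr
  rw [pow_succ']
  nlinarith

lemma tsum_ite_le_rpow {γ δ c a X : ℝ} (hγ : 1 < γ) (hδ : 1 < δ) (hc : 0 < c)
    (hγδ : γ ≤ δ ^ a) :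
    ∑' s : ℕ, (if c * δ ^ s ≤ X then ENNReal.ofReal (γ ^ s) else 0) ≤
      ENNReal.ofReal (γ / (γ - 1) * (X / c) ^ a) := by
  rcases lt_or_ge X c with hXc | hcX
  · have hzero (s : ℕ) : ¬ c * δ ^ s ≤ X := fun h =>
      hXc.not_ge (le_trans (le_mul_of_one_le_right hc.le (one_le_pow₀ hδ.le)) h)
    simp [hzero]
  set Y := X / c
  have hY : 1 ≤ Y := (one_le_div hc).2 hcX
  set S := ⌊Real.logb δ Y⌋₊
  have hle_iff (s : ℕ) : c * δ ^ s ≤ X ↔ s ≤ S := by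
    rw [Nat.le_floor_iff (Real.logb_nonneg hδ hY), Real.le_logb_iff_rpow_le hδ (by linarith),
      Real.rpow_natCast, le_div_iff₀' hc]
  rw [tsum_eq_sum (s := range (S + 1)) fun s hs => by
      rw [if_neg (by rw [hle_iff]; simpa [Nat.lt_succ_iff] using hs)]]
  rw [sum_congr rfl fun s hs => if_pos ((hle_iff s).2 (Nat.lt_succ_iff.1 (mem_range.1 hs))),
    ← ENNReal.ofReal_sum_of_nonneg fun s _ => by positivity]
  refine ENNReal.ofReal_le_ofReal ((geom_sum_le_of_le_rpow hγ (by linarith) hγδ S).trans ?_)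
  have hδS : δ ^ S ≤ Y := by rw [le_div_iff₀' hc]; exact (hle_iff S).2 le_rfl
  have ha : 0 ≤ a := by
    by_contra! ha
    linarith [Real.rpow_lt_one_of_one_lt_of_neg hδ ha]
  gcongr

section Measure

variable {Ω : Type*} [MeasurableSpace Ω] {μ : Measure Ω}

lemma tsum_lintegral_indicator_le {f : Ω → ℝ} (hf : Measurable f) {w : Ω → ℝ≥0∞}
    (hw : Measurable w) {γ δ c a : ℝ} (hγ : 1 < γ) (hδ : 1 < δ) (hc : 0 < c)
    (hγδ : γ ≤ δ ^ a) :
    ∑' s : ℕ, ENNReal.ofReal (γ ^ s) * ∫⁻ x, {x | c * δ ^ s ≤ |f x|}.indicator w x ∂μ ≤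
      ENNReal.ofReal (γ / (γ - 1) / c ^ a) * ∫⁻ x, w x * ENNReal.ofReal (|f x| ^ a) ∂μ := by
  have hset (s : ℕ) : MeasurableSet {x | c * δ ^ s ≤ |f x|} :=
    measurableSet_le measurable_const hf.abs
  have hterm (s : ℕ) (x : Ω) : ENNReal.ofReal (γ ^ s) * {x | c * δ ^ s ≤ |f x|}.indicator w x =
      w x * if c * δ ^ s ≤ |f x| then ENNReal.ofReal (γ ^ s) else 0 := by
    by_cases hx : c * δ ^ s ≤ |f x| <;> simp [Set.indicator, hx, mul_comm]
  calc ∑' s : ℕ, ENNReal.ofReal (γ ^ s) * ∫⁻ x, {x | c * δ ^ s ≤ |f x|}.indicator w x ∂μ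
      = ∫⁻ x, w x * ∑' s : ℕ, (if c * δ ^ s ≤ |f x| then ENNReal.ofReal (γ ^ s) else 0) ∂μ := by
        simp_rw [← lintegral_const_mul' _ _ ENNReal.ofReal_ne_top, hterm, ← ENNReal.tsum_mul_left]
        exact (lintegral_tsum fun s =>
          (hw.mul (Measurable.ite (hset s) measurable_const measurable_const)).aemeasurable).symm
    _ ≤ ∫⁻ x, w x * ENNReal.ofReal (γ / (γ - 1) * (|f x| / c) ^ a) ∂μ :=
        lintegral_mono fun x => mul_le_mul_right (tsum_ite_le_rpow hγ hδ hc hγδ) _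
    _ = _ := by
        rw [← lintegral_const_mul' _ _ ENNReal.ofReal_ne_top]
        congr 1 with x
        have hC : 0 ≤ γ / (γ - 1) / c ^ a :=
          div_nonneg (div_nonneg (by linarith) (by linarith)) (by positivity)
        have h : γ / (γ - 1) * (|f x| / c) ^ a = γ / (γ - 1) / c ^ a * |f x| ^ a := by
          rw [Real.div_rpow (abs_nonneg _) hc.le]; ring
        rw [h, ENNReal.ofReal_mul hC]
        ring

lemma lintegral_ofReal_abs_rpow_lt_top {f : Ω → ℝ} {q : ℝ} (hq : 0 < q)
    (hf : MemLp f (ENNReal.ofReal q) μ) : ∫⁻ x, ENNReal.ofReal (|f x| ^ q) ∂μ < ∞ := by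
  simpa [ENNReal.toReal_ofReal hq.le] using
    (hf.integrable_norm_rpow (by simpa using hq) ENNReal.ofReal_ne_top).lintegral_lt_top

lemma meas_ge_sum_iterate_le_lintegral_div {T : Ω → Ω} (hT : MeasurePreserving T μ μ) {F : Ω → ℝ≥0∞}
    (hF : Measurable F) (b L : ℕ) {t : ℝ≥0∞} (ht0 : t ≠ 0) (ht : t ≠ ∞) :
    μ {ω | t ≤ ∑ j ∈ range L, F (T^[b + j] ω)} ≤ L * (∫⁻ x, F x ∂μ) / t := by
  have hmeas (j : ℕ) : Measurable fun ω => F (T^[b + j] ω) :=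
    hF.comp (hT.measurable.iterate _)
  refine (meas_ge_le_lintegral_div (Finset.measurable_sum _ fun j _ => hmeas j).aemeasurable
    ht0 ht).trans_eq ?_
  rw [lintegral_finsetSum _ fun j _ => hmeas j]
  simp [(hT.iterate _).lintegral_comp hF]

end Measure

section Windows

variable {Ω : Type*} {T : Ω → Ω} {g : Ω → ℝ}

def largeIncrement (T : Ω → Ω) (g : Ω → ℝ) (K : ℝ) : Ω → ℝ≥0∞ :=
  {x | K ≤ |g x - g (T x)|}.indicator fun x => ENNReal.ofReal |g x - g (T x)|

lemma measurable_largeIncrement [MeasurableSpace Ω] (hT : Measurable T) (hg : Measurable g)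
    (K : ℝ) :
    Measurable (largeIncrement T g K) :=
  (ENNReal.measurable_ofReal.comp (hg.sub (hg.comp hT)).abs).indicator
    (measurableSet_le measurable_const (hg.sub (hg.comp hT)).abs)

def windowBadSet (T : Ω → Ω) (g : Ω → ℝ) (L : ℕ) (A K B : ℝ) (b : ℕ) : Set Ω :=
  {ω | A ≤ |g (T^[b] ω)|} ∪
    {ω | ENNReal.ofReal B ≤ ∑ j ∈ range L, largeIncrement T g K (T^[b + j] ω)}

lemma abs_iterate_le_of_notMem_windowBadSet {L b n : ℕ} {A K B : ℝ} {ω : Ω} (hK : 0 ≤ K)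
    (hω : ω ∉ windowBadSet T g L A K B b) (hbn : b ≤ n) (hnL : n < b + L) :
    |g (T^[n] ω)| ≤ A + L * K + B := by
  simp only [windowBadSet, Set.mem_union, Set.mem_ofPred_eq, not_or, not_le] at hω
  obtain ⟨hA, hB⟩ := hω
  have hinc (m : ℕ) : largeIncrement T g K (T^[m] ω) =
      ENNReal.ofReal ({y : ℝ | K ≤ |y|}.indicator abs (g (T^[m] ω) - g (T^[m + 1] ω))) := by
    rw [Function.iterate_succ_apply']
    by_cases h : K ≤ |g (T^[m] ω) - g (T (T^[m] ω))| <;> simp [largeIncrement, Set.indicator, h]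
  simp_rw [hinc, ← ENNReal.ofReal_sum_of_nonneg fun j _ =>
    Set.indicator_nonneg (fun _ _ => abs_nonneg _) _] at hB
  have hB' := (ENNReal.ofReal_lt_ofReal_iff'.1 hB).1
  linarith [abs_le_abs_add_window (fun m => g (T^[m] ω)) hbn hnL hK]

lemma measure_windowBadSet_le [MeasurableSpace Ω] {μ : Measure Ω}
    (hT : MeasurePreserving T μ μ) (hg : Measurable g) (L : ℕ)
    (A K : ℝ) {B : ℝ} (hB : 0 < B) (b : ℕ) :
    μ (windowBadSet T g L A K B b) ≤
      μ {x | A ≤ |g x|} + L * (∫⁻ x, largeIncrement T g K x ∂μ) / ENNReal.ofReal B :=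
  (measure_union_le _ _).trans <| add_le_add
    ((hT.iterate b).measure_preimage
      (measurableSet_le measurable_const hg.abs).nullMeasurableSet).le
    (meas_ge_sum_iterate_le_lintegral_div hT (measurable_largeIncrement hT.measurable hg K) b L
      (by simpa using hB) ENNReal.ofReal_ne_top)

end Windows

section Exponents

def windowLength (p : ℝ) (s : ℕ) : ℕ := ⌈((2 : ℝ) ^ (1 - p / 2)) ^ s⌉₊

def windowCount (p : ℝ) (s : ℕ) : ℕ := 2 ^ s / windowLength p s + 1

variable {p : ℝ}

lemma windowLength_pos (s : ℕ) : 0 < windowLength p s :=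
  Nat.ceil_pos.2 (by positivity)

lemma windowLength_le_two_mul (hp : p ≤ 2) (s : ℕ) :
    (windowLength p s : ℝ) ≤ 2 * ((2 : ℝ) ^ (1 - p / 2)) ^ s := by
  have h1 : 1 ≤ ((2 : ℝ) ^ (1 - p / 2)) ^ s :=
    one_le_pow₀ (Real.one_le_rpow one_le_two (by linarith))
  rw [windowLength]
  linarith [Nat.ceil_lt_add_one (zero_le_one.trans h1)]

lemma windowLength_le_two_pow (hp : 0 ≤ p) (s : ℕ) : windowLength p s ≤ 2 ^ s := by
  refine Nat.ceil_le.2 ?_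
  push_cast
  gcongr
  calc (2 : ℝ) ^ (1 - p / 2) ≤ 2 ^ (1 : ℝ) :=
        Real.rpow_le_rpow_of_exponent_le one_le_two (by linarith)
    _ = 2 := Real.rpow_one 2

lemma windowLength_mul_le (hp : p ≤ 2) {ε : ℝ} (hε : 0 ≤ ε) (s : ℕ) :
    windowLength p s * (ε / 8 * ((2 : ℝ) ^ ((p - 1) / 2)) ^ s) ≤ ε / 4 * √2 ^ s := by
  have hbase : (2 : ℝ) ^ (1 - p / 2) * 2 ^ ((p - 1) / 2) = √2 := by
    rw [← Real.rpow_add two_pos, Real.sqrt_eq_rpow]; ring_nf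
  calc windowLength p s * (ε / 8 * ((2 : ℝ) ^ ((p - 1) / 2)) ^ s)
      ≤ 2 * ((2 : ℝ) ^ (1 - p / 2)) ^ s * (ε / 8 * ((2 : ℝ) ^ ((p - 1) / 2)) ^ s) := by
        gcongr; exact windowLength_le_two_mul hp s
    _ = ε / 4 * √2 ^ s := by rw [← hbase, mul_pow]; ring

lemma windowCount_le (hp₀ : 0 ≤ p) (s : ℕ) :
    (windowCount p s : ℝ) ≤ 2 * ((2 : ℝ) ^ (p / 2)) ^ s := by
  have hbase : (2 : ℝ) / 2 ^ (1 - p / 2) = 2 ^ (p / 2) := by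
    rw [div_eq_iff (by positivity), ← Real.rpow_add two_pos]; ring_nf; exact (Real.rpow_one 2).symm
  have hdiv : ((2 ^ s / windowLength p s : ℕ) : ℝ) ≤ ((2 : ℝ) ^ (p / 2)) ^ s :=
    calc ((2 ^ s / windowLength p s : ℕ) : ℝ) ≤ (2 : ℝ) ^ s / windowLength p s := by
          exact_mod_cast Nat.cast_div_le
      _ ≤ (2 : ℝ) ^ s / ((2 : ℝ) ^ (1 - p / 2)) ^ s := by
          gcongr; exact Nat.le_ceil _
      _ = ((2 : ℝ) ^ (p / 2)) ^ s := by rw [← div_pow, hbase]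
  have h1 : (1 : ℝ) ≤ ((2 : ℝ) ^ (p / 2)) ^ s :=
    one_le_pow₀ (Real.one_le_rpow one_le_two (by linarith))
  rw [windowCount]
  push_cast
  linarith

lemma windowCount_mul_windowLength_le (hp₀ : 0 ≤ p) (s : ℕ) :
    windowCount p s * windowLength p s ≤ 2 ^ (s + 1) := by
  have := Nat.div_mul_le_self (2 ^ s) (windowLength p s)
  have := windowLength_le_two_pow hp₀ s
  rw [windowCount, add_mul, one_mul, pow_succ]
  omega

end Exponents

section Blocks

variable {Ω : Type*} {T : Ω → Ω} {g : Ω → ℝ} {p ε : ℝ}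

def blockBadSet (T : Ω → Ω) (g : Ω → ℝ) (p ε : ℝ) (s : ℕ) : Set Ω :=
  ⋃ i ∈ range (windowCount p s),
    windowBadSet T g (windowLength p s) (ε / 2 * √2 ^ s)
      (ε / 8 * ((2 : ℝ) ^ ((p - 1) / 2)) ^ s) (ε / 4 * √2 ^ s) (2 ^ s + i * windowLength p s)

lemma abs_iterate_le_of_notMem_blockBadSet (hp : p ≤ 2) (hε : 0 ≤ ε) {s n : ℕ} {ω : Ω}
    (hω : ω ∉ blockBadSet T g p ε s) (hn₁ : 2 ^ s ≤ n) (hn₂ : n < 2 ^ (s + 1)) :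
    |g (T^[n] ω)| ≤ ε * √2 ^ s := by
  set L := windowLength p s
  set i := (n - 2 ^ s) / L
  have hL : 0 < L := windowLength_pos s
  have hi : i < windowCount p s :=
    Nat.lt_succ_of_le (Nat.div_le_div_right (by rw [pow_succ] at hn₂; omega))
  have hbn : 2 ^ s + i * L ≤ n := by
    have : i * L ≤ n - 2 ^ s := Nat.div_mul_le_self _ _
    omega
  have hnL : n < 2 ^ s + i * L + L := by
    have : n - 2 ^ s < i * L + L := Nat.lt_div_mul_add hL
    omega
  have hωi := fun h => hω (Set.mem_biUnion (mem_range.2 hi) h)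
  have := abs_iterate_le_of_notMem_windowBadSet (by positivity) hωi hbn hnL
  linarith [windowLength_mul_le hp hε s]

lemma measure_blockBadSet_le [MeasurableSpace Ω] {μ : Measure Ω}
    (hT : MeasurePreserving T μ μ) (hg : Measurable g) (hp₀ : 0 ≤ p) (hε : 0 < ε) (s : ℕ) :
    μ (blockBadSet T g p ε s) ≤
      2 * (ENNReal.ofReal (((2 : ℝ) ^ (p / 2)) ^ s) * μ {x | ε / 2 * √2 ^ s ≤ |g x|}) +
      ENNReal.ofReal (8 / ε) * (ENNReal.ofReal (√2 ^ s) *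
        ∫⁻ x, largeIncrement T g (ε / 8 * ((2 : ℝ) ^ ((p - 1) / 2)) ^ s) x ∂μ) := by
  set N := windowCount p s
  set L := windowLength p s
  set B := ε / 4 * √2 ^ s
  have hB : 0 < B := by positivity
  have hN : (N : ℝ≥0∞) ≤ 2 * ENNReal.ofReal (((2 : ℝ) ^ (p / 2)) ^ s) := by
    rw [← ENNReal.ofReal_natCast, ← ENNReal.ofReal_ofNat, ← ENNReal.ofReal_mul (by norm_num)]
    exact ENNReal.ofReal_le_ofReal (windowCount_le hp₀ s)
  have hNL : (N : ℝ≥0∞) * L / ENNReal.ofReal B ≤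
      ENNReal.ofReal (8 / ε) * ENNReal.ofReal (√2 ^ s) := by
    have hsq : √2 ^ s * √2 ^ s = 2 ^ s := by rw [← mul_pow, Real.mul_self_sqrt zero_le_two]
    have hcard : ((N * L : ℕ) : ℝ) ≤ 2 ^ (s + 1) := by
      exact_mod_cast windowCount_mul_windowLength_le hp₀ s
    have hreal : ((N * L : ℕ) : ℝ) / B ≤ 8 / ε * √2 ^ s := by
      rw [div_le_iff₀ hB]
      calc ((N * L : ℕ) : ℝ) ≤ 2 ^ (s + 1) := hcard
        _ = 8 / ε * √2 ^ s * B := by field_simp; rw [pow_succ, ← hsq]; ring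
    rw [← ENNReal.ofReal_mul (by positivity), ← Nat.cast_mul, ← ENNReal.ofReal_natCast,
      ← ENNReal.ofReal_div_of_pos hB]
    exact ENNReal.ofReal_le_ofReal hreal
  calc μ (blockBadSet T g p ε s)
      ≤ ∑ i ∈ range N, μ (windowBadSet T g L (ε / 2 * √2 ^ s)
          (ε / 8 * ((2 : ℝ) ^ ((p - 1) / 2)) ^ s) B (2 ^ s + i * L)) :=
        measure_biUnion_finset_le _ _
    _ ≤ ∑ i ∈ range N, (μ {x | ε / 2 * √2 ^ s ≤ |g x|} + L *
          (∫⁻ x, largeIncrement T g (ε / 8 * ((2 : ℝ) ^ ((p - 1) / 2)) ^ s) x ∂μ) /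
            ENNReal.ofReal B) :=
        sum_le_sum fun i _ => measure_windowBadSet_le hT hg _ _ _ hB _
    _ = N * μ {x | ε / 2 * √2 ^ s ≤ |g x|} + N * L / ENNReal.ofReal B *
          ∫⁻ x, largeIncrement T g (ε / 8 * ((2 : ℝ) ^ ((p - 1) / 2)) ^ s) x ∂μ := by
        rw [sum_const, card_range, nsmul_eq_mul, mul_add]
        simp only [div_eq_mul_inv]
        ring
    _ ≤ _ := by
        rw [← mul_assoc, ← mul_assoc]
        gcongr

end Blocks

section Main

variable {Ω : Type*} [MeasurableSpace Ω] {μ : Measure Ω} {T : Ω → Ω} {g : Ω → ℝ} {p r : ℝ}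

lemma tsum_measure_blockBadSet_ne_top (hT : MeasurePreserving T μ μ) (hpr : p.HolderConjugate r)
    (hg : Measurable g) (hgLp : MemLp g (ENNReal.ofReal p) μ)
    (hcobLr : MemLp (fun ω => g ω - g (T ω)) (ENNReal.ofReal r) μ) {ε : ℝ} (hε : 0 < ε) :
    ∑' s, μ (blockBadSet T g p ε s) ≠ ∞ := by
  have hp₁ : 1 < p := hpr.lt
  have hr₁ : 1 < r := hpr.symm.lt
  have hcob : Measurable fun x => g x - g (T x) := hg.sub (hg.comp hT.measurable)
  refine ne_top_of_le_ne_top ?_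
    (ENNReal.tsum_le_tsum (measure_blockBadSet_le hT hg hpr.nonneg hε))
  rw [ENNReal.tsum_add, ENNReal.tsum_mul_left, ENNReal.tsum_mul_left]
  refine ENNReal.add_ne_top.2 ⟨ENNReal.mul_ne_top ENNReal.ofNat_ne_top ?_,
    ENNReal.mul_ne_top ENNReal.ofReal_ne_top ?_⟩
  · have hγδ : (2 : ℝ) ^ (p / 2) ≤ √2 ^ p := by
      rw [Real.sqrt_eq_rpow, ← Real.rpow_mul zero_le_two]; ring_nf; rfl
    have hsum := tsum_lintegral_indicator_le (μ := μ) hg (w := 1) measurable_one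
      (Real.one_lt_rpow one_lt_two (by linarith)) Real.one_lt_sqrt_two (half_pos hε) hγδ
    simp_rw [lintegral_indicator_one (measurableSet_le measurable_const hg.abs), Pi.one_apply,
      one_mul] at hsum
    exact ne_top_of_le_ne_top (ENNReal.mul_ne_top ENNReal.ofReal_ne_top
      (lintegral_ofReal_abs_rpow_lt_top hpr.pos hgLp).ne) hsum
  · have hγδ : √2 ≤ ((2 : ℝ) ^ ((p - 1) / 2)) ^ (r - 1) := by
      have : (p - 1) * (r - 1) = 1 := by linarith [hpr.sub_one_mul_conj]
      rw [Real.sqrt_eq_rpow, ← Real.rpow_mul zero_le_two]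
      exact le_of_eq (by congr 1; linear_combination -this / 2)
    have hsum := tsum_lintegral_indicator_le (μ := μ) hcob
      (w := fun x => ENNReal.ofReal |g x - g (T x)|) (ENNReal.measurable_ofReal.comp hcob.abs)
      Real.one_lt_sqrt_two (Real.one_lt_rpow one_lt_two (by linarith))
      (by positivity : 0 < ε / 8) hγδ
    have hint (x : Ω) : ENNReal.ofReal |g x - g (T x)| *
        ENNReal.ofReal (|g x - g (T x)| ^ (r - 1)) = ENNReal.ofReal (|g x - g (T x)| ^ r) := by
      rw [← ENNReal.ofReal_mul (abs_nonneg _), ← Real.rpow_one_add' (abs_nonneg _) (by linarith),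
        add_sub_cancel]
    simp only [hint] at hsum
    exact ne_top_of_le_ne_top (ENNReal.mul_ne_top ENNReal.ofReal_ne_top
      (lintegral_ofReal_abs_rpow_lt_top (by linarith) hcobLr).ne) hsum

lemma sqrt_two_pow_le_sqrt {s n : ℕ} (h : 2 ^ s ≤ n) : √2 ^ s ≤ √(n : ℝ) := by
  rw [Real.le_sqrt (by positivity) (by positivity), ← pow_mul, mul_comm, pow_mul,
    Real.sq_sqrt zero_le_two]
  exact_mod_cast h

theorem ae_eventually_abs_iterate_le (hT : MeasurePreserving T μ μ) (hpr : p.HolderConjugate r)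
    (hp : p ≤ 2) (hg : Measurable g) (hgLp : MemLp g (ENNReal.ofReal p) μ)
    (hcobLr : MemLp (fun ω => g ω - g (T ω)) (ENNReal.ofReal r) μ) {ε : ℝ} (hε : 0 < ε) :
    ∀ᵐ ω ∂μ, ∀ᶠ n in atTop, |g (T^[n] ω)| ≤ ε * √(n : ℝ) := by
  filter_upwards [ae_eventually_notMem
    (tsum_measure_blockBadSet_ne_top hT hpr hg hgLp hcobLr hε)] with ω hω
  obtain ⟨s₀, hs₀⟩ := eventually_atTop.1 hω
  refine eventually_atTop.2 ⟨2 ^ s₀, fun n hn => ?_⟩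
  have hn₀ : n ≠ 0 := by have := Nat.one_le_two_pow.trans hn; omega
  have hlog := Nat.pow_log_le_self 2 hn₀
  calc |g (T^[n] ω)| ≤ ε * √2 ^ Nat.log 2 n :=
        abs_iterate_le_of_notMem_blockBadSet hp hε.le (hs₀ _ (Nat.le_log_of_pow_le one_lt_two hn))
          hlog (Nat.lt_pow_succ_log_self one_lt_two n)
    _ ≤ ε * √(n : ℝ) := by gcongr; exact sqrt_two_pow_le_sqrt hlog

theorem ae_isLittleO_sqrt (hT : MeasurePreserving T μ μ) (hpr : p.HolderConjugate r)
    (hp : p ≤ 2) (hg : Measurable g) (hgLp : MemLp g (ENNReal.ofReal p) μ)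
    (hcobLr : MemLp (fun ω => g ω - g (T ω)) (ENNReal.ofReal r) μ) :
    ∀ᵐ ω ∂μ, (fun n : ℕ => g (T^[n] ω)) =o[atTop] fun n => √(n : ℝ) := by
  have h := ae_all_iff.2 fun k : ℕ =>
    ae_eventually_abs_iterate_le hT hpr hp hg hgLp hcobLr (ε := ((k : ℝ) + 1)⁻¹) (by positivity)
  filter_upwards [h] with ω hω
  refine Asymptotics.isLittleO_iff_nat_mul_le.2 fun k => (hω k).mono fun n hn => ?_
  rw [Real.norm_eq_abs, Real.norm_of_nonneg (Real.sqrt_nonneg _)]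
  calc (k : ℝ) * |g (T^[n] ω)| ≤ ((k : ℝ) + 1) * |g (T^[n] ω)| := by gcongr; linarith
    _ ≤ √(n : ℝ) := by rwa [le_inv_mul_iff₀ (by positivity)] at hn

end Main

lemma sqrt_isBigO_sqrt_mul_log_log :
    (fun n : ℕ => √(n : ℝ)) =O[atTop] fun n : ℕ => √(n * Real.log (Real.log n)) := by
  have hloglog : ∀ᶠ n : ℕ in atTop, 1 ≤ Real.log (Real.log n) :=
    (Real.tendsto_log_atTop.comp
      (Real.tendsto_log_atTop.comp tendsto_natCast_atTop_atTop)).eventually_ge_atTop 1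
  refine Asymptotics.IsBigO.of_bound' (hloglog.mono fun n hn => ?_)
  rw [Real.norm_of_nonneg (Real.sqrt_nonneg _), Real.norm_of_nonneg (Real.sqrt_nonneg _)]
  gcongr
  exact le_mul_of_one_le_right (Nat.cast_nonneg n) hn

end Coboundary

open Coboundary in
theorem stmt2_general {Ω : Type*} [MeasurableSpace Ω] (μ : Measure Ω)
    (T : Ω ≃ᵐ Ω) (hT : MeasurePreserving (⇑T) μ μ)
    (p r : ℝ) (hp2 : p < 2) (hr : 2 < r) (hpr : p = r / (r - 1))
    (g : Ω → ℝ) (hg : Measurable g)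
    (hgLp : MemLp g (ENNReal.ofReal p) μ)
    (hcobLr : MemLp (fun ω => g ω - g (T ω)) (ENNReal.ofReal r) μ) :
    ∀ᵐ ω ∂μ, Tendsto
      (fun n : ℕ => g ((⇑T)^[n] ω) / Real.sqrt (n * Real.log (Real.log n)))
      atTop (𝓝 0) := by
  have hconj : p.HolderConjugate r :=
    ((Real.holderConjugate_iff_eq_conjExponent (by linarith)).2 hpr).symm
  filter_upwards [ae_isLittleO_sqrt hT hconj hp2.le hg hgLp hcobLr] with ω hω
  exact (hω.trans_isBigO sqrt_isBigO_sqrt_mul_log_log).tendsto_div_nhds_zero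

/-- **Theorem 2.4 (ii), key conclusion**: if `1 < p < 2 < r`, `p = r/(r-1)`, `g ∈ 𝕃^p` and
`g - g∘T ∈ 𝕃^r`, then `(n log log n)^{-1/2} g ∘ T^n → 0` almost surely. -/
theorem stmt2 {Ω : Type*} [MeasurableSpace Ω] (μ : Measure Ω) [IsProbabilityMeasure μ]
    (T : Ω ≃ᵐ Ω) (hT : MeasurePreserving (⇑T) μ μ)
    (p r : ℝ) (hp1 : 1 < p) (hp2 : p < 2) (hr : 2 < r) (hpr : p = r / (r - 1))
    (g : Ω → ℝ) (hg : Measurable g)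
    (hgLp : MemLp g (ENNReal.ofReal p) μ)
    (hcobLr : MemLp (fun ω => g ω - g (T ω)) (ENNReal.ofReal r) μ) :
    ∀ᵐ ω ∂μ, Tendsto
      (fun n : ℕ => g ((⇑T)^[n] ω) / Real.sqrt (n * Real.log (Real.log n)))
      atTop (𝓝 0) :=
  stmt2_general μ T hT p r hp2 hr hpr g hg hgLp hcobLr
end
end

section
/- Let q > 1 and let h : Ω → ℝ be a measurable function in 𝕃_0^{q,∞}, i.e. t^q μ{|h| ≥ t} → 0 as t → +∞. If (A_t)_{t>0} is a family of measurable sets with μ(A_t) → 0 as t → +∞, then lim_{t→+∞} sup_{s > 0} s^q · μ({|h| ≥ s} ∩ A_t) = 0. -/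
open MeasureTheory Filter Topology
open scoped ENNReal NNReal

noncomputable section

/-- **Step (3.9)-(3.10)**: if `h ∈ 𝕃₀^{q,∞}` and `μ(A_t) → 0` as `t → ∞`, then
`sup_{s>0} s^q μ({|h| ≥ s} ∩ A_t) → 0` as `t → ∞`. -/
theorem stmt14 {Ω : Type*} [MeasurableSpace Ω] (μ : Measure Ω) [IsProbabilityMeasure μ]
    (q : ℝ) (hq : 1 < q)
    (h : Ω → ℝ) (hmeas : Measurable h)
    (hweak : Tendsto (fun t : ℝ => ENNReal.ofReal (t ^ q) * μ {ω | t ≤ |h ω|})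
      atTop (𝓝 0))
    (A : ℝ → Set Ω) (hAmeas : ∀ t : ℝ, MeasurableSet (A t))
    (hA : Tendsto (fun t : ℝ => μ (A t)) atTop (𝓝 0)) :
    Tendsto (fun t : ℝ =>
        ⨆ (s : ℝ) (_ : 0 < s), ENNReal.ofReal (s ^ q) * μ ({ω | s ≤ |h ω|} ∩ A t))
      atTop (𝓝 0) := by
  rw [ENNReal.tendsto_nhds_zero]
  intro ε hε
  rw [ENNReal.tendsto_nhds_zero] at hweak hA
  obtain ⟨S₀, hS₀⟩ := eventually_atTop.mp (hweak ε hε)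
  set S : ℝ := max S₀ 1 with hSdef
  have hS1 : (1 : ℝ) ≤ S := le_max_right _ _
  have hSpow : (1 : ℝ) ≤ S ^ q :=
    Real.one_le_rpow hS1 (by linarith)
  have hc0 : ENNReal.ofReal (S ^ q) ≠ 0 := by
    simp [ENNReal.ofReal_eq_zero]; linarith
  have hcT : ENNReal.ofReal (S ^ q) ≠ ∞ := ENNReal.ofReal_ne_top
  have hδ : 0 < ε / ENNReal.ofReal (S ^ q) := ENNReal.div_pos hε.ne' hcT
  filter_upwards [hA _ hδ] with t ht
  refine iSup₂_le fun s hs => ?_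
  rcases le_or_gt S s with hcase | hcase
  · calc ENNReal.ofReal (s ^ q) * μ ({ω | s ≤ |h ω|} ∩ A t)
        ≤ ENNReal.ofReal (s ^ q) * μ {ω | s ≤ |h ω|} :=
          mul_le_mul_right (measure_mono Set.inter_subset_left) _
      _ ≤ ε := hS₀ s (le_trans (le_max_left _ _) hcase)
  · calc ENNReal.ofReal (s ^ q) * μ ({ω | s ≤ |h ω|} ∩ A t)
        ≤ ENNReal.ofReal (S ^ q) * μ (A t) := by
          exact mul_le_mul'
            (ENNReal.ofReal_le_ofReal (Real.rpow_le_rpow hs.le hcase.le (by linarith)))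
            (measure_mono Set.inter_subset_right)
      _ ≤ ENNReal.ofReal (S ^ q) * (ε / ENNReal.ofReal (S ^ q)) :=
          mul_le_mul_right ht _
      _ ≤ ε := ENNReal.mul_div_le
end
end

section
/- Let q > 1, let f : [0,1] → ℝ be Lebesgue-integrable, and let n ≥ 1 be an integer. Define g_n(x) := 2^{-n} Σ_{j=0}^{2^n − 1} ∫_0^1 ( f((x+j)/2^n) − f((y+j)/2^n) ) dy for x ∈ [0,1]. Then ∫_0^1 |g_n(x)|^q dx ≤ 2^n ∫_0^1 ∫_0^1 1_{|x−y| ≤ 2^{-n}} |f(x) − f(y)|^q dx dy. (This is the conditional expectation E[f∘T^n | ℳ] for the Bernoulli shift with ℳ = σ(ε_i, i ≤ 0), and the bound follows from Jensen's inequality.) -/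
/-!
By the triangle inequality, convexity of `t ↦ t ^ q` applied to the average over `j`, and Jensen's
inequality in `y` (`[0,1]` is a probability space), `|gₙ(x)| ^ q` is at most the average over `j`
of `∫₀¹ |f((x+j)/2ⁿ) - f((y+j)/2ⁿ)| ^ q dy`. Integrating in `x` and substituting
`u = (x+j)/2ⁿ`, `v = (y+j)/2ⁿ` turns the `j`-th term into `4ⁿ` times a double integral over the
square of the `j`-th dyadic interval, on which `|u - v| ≤ 2⁻ⁿ`; these intervals tile `[0,1]`.
-/

open MeasureTheory
open scoped ENNReal

theorem enorm_integral_rpow_le_lintegral_enorm_rpow {α E : Type*} [MeasurableSpace α]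
    [NormedAddCommGroup E] [NormedSpace ℝ E] {μ : Measure α} [IsProbabilityMeasure μ] {q : ℝ}
    (hq : 1 ≤ q) {g : α → E} (hg : AEStronglyMeasurable g μ) :
    ‖∫ y, g y ∂μ‖ₑ ^ q ≤ ∫⁻ y, ‖g y‖ₑ ^ q ∂μ := by
  have hq0 : 0 < q := zero_lt_one.trans_le hq
  calc ‖∫ y, g y ∂μ‖ₑ ^ q ≤ eLpNorm' g 1 μ ^ q := by
        gcongr
        simpa [eLpNorm'] using enorm_integral_le_lintegral_enorm g
    _ ≤ eLpNorm' g q μ ^ q := by gcongr; exact eLpNorm'_le_eLpNorm'_of_exponent_le one_pos hq μ hg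
    _ = ∫⁻ y, ‖g y‖ₑ ^ q ∂μ := (lintegral_rpow_enorm_eq_rpow_eLpNorm' hq0).symm

theorem ofReal_abs_rpow_eq_enorm_rpow {q : ℝ} (hq : 0 ≤ q) (x : ℝ) :
    ENNReal.ofReal (|x| ^ q) = ‖x‖ₑ ^ q := by
  rw [Real.enorm_eq_ofReal_abs, ENNReal.ofReal_rpow_of_nonneg (abs_nonneg x) hq]

theorem ofReal_abs_average_integral_rpow_le {ι α : Type*} [MeasurableSpace α] {μ : Measure α}
    [IsProbabilityMeasure μ] {q : ℝ} (hq : 1 ≤ q) {s : Finset ι} (hs : s.Nonempty)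
    {g : ι → α → ℝ} (hg : ∀ j ∈ s, AEStronglyMeasurable (g j) μ) :
    ENNReal.ofReal (|(s.card : ℝ)⁻¹ * ∑ j ∈ s, ∫ y, g j y ∂μ| ^ q) ≤
      (s.card : ℝ≥0∞)⁻¹ * ∑ j ∈ s, ∫⁻ y, ENNReal.ofReal (|g j y| ^ q) ∂μ := by
  have hq0 : 0 ≤ q := zero_le_one.trans hq
  have hw : ∑ _j ∈ s, (s.card : ℝ≥0∞)⁻¹ = 1 := by
    rw [Finset.sum_const, nsmul_eq_mul, ENNReal.mul_inv_cancel] <;> simp [hs.ne_empty]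
  simp only [ofReal_abs_rpow_eq_enorm_rpow hq0]
  calc ‖(s.card : ℝ)⁻¹ * ∑ j ∈ s, ∫ y, g j y ∂μ‖ₑ ^ q
      ≤ (∑ j ∈ s, (s.card : ℝ≥0∞)⁻¹ * ‖∫ y, g j y ∂μ‖ₑ) ^ q := by
        gcongr
        rw [enorm_mul, ← Finset.mul_sum, enorm_inv (by simp [hs.ne_empty]), Real.enorm_natCast]
        gcongr
        exact enorm_sum_le _ _
    _ ≤ ∑ j ∈ s, (s.card : ℝ≥0∞)⁻¹ * ‖∫ y, g j y ∂μ‖ₑ ^ q :=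
        ENNReal.rpow_arith_mean_le_arith_mean_rpow _ _ _ hw hq
    _ ≤ (s.card : ℝ≥0∞)⁻¹ * ∑ j ∈ s, ∫⁻ y, ‖g j y‖ₑ ^ q ∂μ := by
        rw [Finset.mul_sum]
        gcongr with j hj
        exact enorm_integral_rpow_le_lintegral_enorm_rpow hq (hg j hj)

theorem setLIntegral_Icc_comp_add_div (g : ℝ → ℝ≥0∞) {c : ℝ} (hc : 0 < c) (a b d : ℝ) :
    ∫⁻ y in Set.Icc b d, g ((y + a) / c) =
      ENNReal.ofReal c * ∫⁻ u in Set.Icc ((b + a) / c) ((d + a) / c), g u := by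
  have himage : (fun y => (y + a) / c) '' Set.Icc b d = Set.Icc ((b + a) / c) ((d + a) / c) := by
    rw [show (fun y => (y + a) / c) = (c⁻¹ * · + a / c) by ext; ring,
      Set.image_affine_Icc' (inv_pos.2 hc)]
    congr 1 <;> ring
  rw [← himage, lintegral_image_eq_lintegral_abs_deriv_mul (f' := fun _ => 1 / c)
    measurableSet_Icc (fun y _ => (((hasDerivAt_id' y).add_const a).div_const c).hasDerivWithinAt)
    (fun y _ z _ h => by simpa [hc.ne'] using h), lintegral_const_mul' _ _ ENNReal.ofReal_ne_top,
    ← mul_assoc, ← ENNReal.ofReal_mul hc.le]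
  simp [abs_of_pos hc, hc.ne']

theorem setLIntegral_Icc_setLIntegral_Icc_comp_add_div (F : ℝ → ℝ → ℝ≥0∞) {c : ℝ} (hc : 0 < c)
    (a b d : ℝ) :
    ∫⁻ x in Set.Icc b d, ∫⁻ y in Set.Icc b d, F ((x + a) / c) ((y + a) / c) =
      ENNReal.ofReal c ^ 2 * ∫⁻ u in Set.Icc ((b + a) / c) ((d + a) / c),
        ∫⁻ v in Set.Icc ((b + a) / c) ((d + a) / c), F u v := by
  simp_rw [setLIntegral_Icc_comp_add_div (F _) hc]
  rw [lintegral_const_mul' _ _ ENNReal.ofReal_ne_top,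
    setLIntegral_Icc_comp_add_div (fun u => ∫⁻ v in _, F u v) hc, ← mul_assoc, sq]

theorem setLIntegral_setLIntegral_le_of_abs_sub_le {μ : Measure ℝ} {D I : Set ℝ}
    (hD : MeasurableSet D) (hDI : D ⊆ I) {r : ℝ} (hr : ∀ u ∈ D, ∀ v ∈ D, |u - v| ≤ r)
    (F : ℝ → ℝ → ℝ≥0∞) :
    ∫⁻ u in D, ∫⁻ v in D, F u v ∂μ ∂μ ≤
      ∫⁻ u in D, ∫⁻ v in I, (if |u - v| ≤ r then F u v else 0) ∂μ ∂μ := by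
  refine setLIntegral_mono' hD fun u hu => ?_
  calc ∫⁻ v in D, F u v ∂μ = ∫⁻ v in D, (if |u - v| ≤ r then F u v else 0) ∂μ :=
        setLIntegral_congr_fun hD fun v hv => (if_pos (hr u hu v hv)).symm
    _ ≤ ∫⁻ v in I, (if |u - v| ≤ r then F u v else 0) ∂μ := lintegral_mono_set hDI

theorem Icc_natCast_div_subset_Icc_zero_one {c : ℝ} (hc : 0 < c) {N j : ℕ} (hN : (N : ℝ) ≤ c)
    (hj : j < N) : Set.Icc ((j : ℝ) / c) ((j + 1) / c) ⊆ Set.Icc 0 1 := by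
  refine Set.Icc_subset_Icc (by positivity) ((div_le_one hc).2 (le_trans ?_ hN))
  exact_mod_cast hj

theorem sum_setLIntegral_Icc_div_le (h : ℝ → ℝ≥0∞) {c : ℝ} (hc : 0 < c) {N : ℕ}
    (hN : (N : ℝ) ≤ c) :
    ∑ j ∈ Finset.range N, ∫⁻ u in Set.Icc ((j : ℝ) / c) ((j + 1) / c), h u ≤
      ∫⁻ u in Set.Icc 0 1, h u := by
  have hdisj :
      Pairwise (Function.onFun Disjoint fun j : ℕ => Set.Ico ((j : ℝ) / c) ((j + 1) / c)) := by
    simpa using Monotone.pairwise_disjoint_on_Ico_succ (f := fun j : ℕ => (j : ℝ) / c)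
      fun i j hij => by dsimp only; gcongr
  calc ∑ j ∈ Finset.range N, ∫⁻ u in Set.Icc ((j : ℝ) / c) ((j + 1) / c), h u
      = ∫⁻ u in ⋃ j ∈ Finset.range N, Set.Ico ((j : ℝ) / c) ((j + 1) / c), h u := by
        rw [lintegral_biUnion_finset (hdisj.set_pairwise _) fun _ _ => measurableSet_Ico]
        simp_rw [Measure.restrict_congr_set Ico_ae_eq_Icc]
    _ ≤ ∫⁻ u in Set.Icc 0 1, h u := by
        refine lintegral_mono_set (Set.iUnion₂_subset fun j hj => ?_)
        exact Set.Ico_subset_Icc_self.trans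
          (Icc_natCast_div_subset_Icc_zero_one hc hN (Finset.mem_range.1 hj))

theorem setLIntegral_Icc_average_comp_add_div_le {F : ℝ → ℝ → ℝ≥0∞}
    (hF : Measurable (Function.uncurry F)) {c : ℝ} (hc : 0 < c) {N : ℕ} (hN : (N : ℝ) ≤ c) :
    ∫⁻ x in Set.Icc 0 1, (ENNReal.ofReal c)⁻¹ * ∑ j ∈ Finset.range N,
        ∫⁻ y in Set.Icc 0 1, F ((x + j) / c) ((y + j) / c) ≤
      ENNReal.ofReal c *
        ∫⁻ u in Set.Icc 0 1, ∫⁻ v in Set.Icc 0 1, (if |u - v| ≤ c⁻¹ then F u v else 0) := by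
  set D : ℕ → Set ℝ := fun j => Set.Icc ((j : ℝ) / c) ((j + 1) / c)
  have hc' : ENNReal.ofReal c ≠ 0 := (ENNReal.ofReal_pos.2 hc).ne'
  calc _ = (ENNReal.ofReal c)⁻¹ * ∑ j ∈ Finset.range N,
          ENNReal.ofReal c ^ 2 * ∫⁻ u in D j, ∫⁻ v in D j, F u v := by
        rw [lintegral_const_mul' _ _ (ENNReal.inv_ne_top.2 hc'), lintegral_finsetSum']
        · simp_rw [setLIntegral_Icc_setLIntegral_Icc_comp_add_div F hc, zero_add,
            add_comm (1 : ℝ), D]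
        · exact fun j _ => ((hF.comp (by fun_prop : Measurable fun p : ℝ × ℝ =>
            ((p.1 + j) / c, (p.2 + j) / c))).lintegral_prod_right').aemeasurable
    _ ≤ ENNReal.ofReal c * ∑ j ∈ Finset.range N,
          ∫⁻ u in D j, ∫⁻ v in Set.Icc 0 1, (if |u - v| ≤ c⁻¹ then F u v else 0) := by
        rw [Finset.mul_sum, Finset.mul_sum]
        refine Finset.sum_le_sum fun j hj => ?_
        rw [sq, ← mul_assoc, ← mul_assoc, ENNReal.inv_mul_cancel hc' ENNReal.ofReal_ne_top,
          one_mul]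
        refine mul_le_mul_right (setLIntegral_setLIntegral_le_of_abs_sub_le measurableSet_Icc
          (Icc_natCast_div_subset_Icc_zero_one hc hN (Finset.mem_range.1 hj))
          (fun u hu v hv => ?_) F) _
        calc |u - v| = dist u v := (Real.dist_eq u v).symm
          _ ≤ (j + 1) / c - j / c := Real.dist_le_of_mem_Icc hu hv
          _ = c⁻¹ := by ring
    _ ≤ _ := by
        gcongr
        exact sum_setLIntegral_Icc_div_le _ hc hN

theorem stmt17_general (q : ℝ) (hq : 1 < q)
    (f : ℝ → ℝ) (hfmeas : Measurable f)
    (n : ℕ) :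
    (∫⁻ x in Set.Icc (0 : ℝ) 1,
        ENNReal.ofReal
          (|((2 : ℝ) ^ n)⁻¹ * ∑ j ∈ Finset.range (2 ^ n),
              ∫ y in Set.Icc (0 : ℝ) 1,
                (f ((x + j) / 2 ^ n) - f ((y + j) / 2 ^ n))| ^ q)) ≤
      ENNReal.ofReal ((2 : ℝ) ^ n) *
        ∫⁻ x in Set.Icc (0 : ℝ) 1, ∫⁻ y in Set.Icc (0 : ℝ) 1,
          (if |x - y| ≤ ((2 : ℝ) ^ n)⁻¹ then ENNReal.ofReal (|f x - f y| ^ q) else 0) := by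
  have hN : ((2 ^ n : ℕ) : ℝ) = 2 ^ n := by push_cast; rfl
  have : IsProbabilityMeasure (volume.restrict (Set.Icc (0 : ℝ) 1)) := ⟨by simp⟩
  refine le_trans (lintegral_mono fun x => ?_)
    (setLIntegral_Icc_average_comp_add_div_le (F := fun u v => ENNReal.ofReal (|f u - f v| ^ q))
      (by fun_prop) (by positivity) hN.le)
  have h := ofReal_abs_average_integral_rpow_le (μ := volume.restrict (Set.Icc 0 1)) hq.le
    (s := Finset.range (2 ^ n)) (by simp)
    (g := fun j y => f ((x + j) / 2 ^ n) - f ((y + j) / 2 ^ n))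
    fun j _ => (by fun_prop : Measurable _).aestronglyMeasurable
  rwa [Finset.card_range, ← ENNReal.ofReal_natCast, hN] at h

/-- **Lemma 3.2, inequality (3.66)** (via the representation (3.68) of `E[f∘Tⁿ|ℳ]` for the
Bernoulli shift): for `q > 1` and `f` integrable on `[0,1]`,
`∫₀¹ |gₙ(x)|^q dx ≤ 2ⁿ ∫₀¹∫₀¹ 1_{|x-y| ≤ 2⁻ⁿ} |f(x) - f(y)|^q dx dy`, where
`gₙ(x) = 2⁻ⁿ ∑_{j<2ⁿ} ∫₀¹ (f((x+j)/2ⁿ) - f((y+j)/2ⁿ)) dy`. -/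
theorem stmt17 (q : ℝ) (hq : 1 < q)
    (f : ℝ → ℝ) (hfmeas : Measurable f)
    (hfint : IntegrableOn f (Set.Icc (0 : ℝ) 1))
    (n : ℕ) (hn : 1 ≤ n) :
    (∫⁻ x in Set.Icc (0 : ℝ) 1,
        ENNReal.ofReal
          (|((2 : ℝ) ^ n)⁻¹ * ∑ j ∈ Finset.range (2 ^ n),
              ∫ y in Set.Icc (0 : ℝ) 1,
                (f ((x + j) / 2 ^ n) - f ((y + j) / 2 ^ n))| ^ q)) ≤
      ENNReal.ofReal ((2 : ℝ) ^ n) *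
        ∫⁻ x in Set.Icc (0 : ℝ) 1, ∫⁻ y in Set.Icc (0 : ℝ) 1,
          (if |x - y| ≤ ((2 : ℝ) ^ n)⁻¹ then ENNReal.ofReal (|f x - f y| ^ q) else 0) :=
  stmt17_general q hq f hfmeas n
end

section
/- Let q > 1 and δ > 0, and let f : [0,1] → ℝ be measurable. If ∫_0^1 ∫_0^1 (|f(x) − f(y)|^q / |x−y|) · (log(1/|x−y|))^{q−1+δ} dx dy < ∞, then Σ_{n=1}^{∞} ( 2^n ∫_0^1 ∫_0^1 1_{|x−y| ≤ 2^{-n}} |f(x) − f(y)|^q dx dy )^{1/q} < ∞. (Combined with the Jensen bound for the Bernoulli shift, this yields the convergence of Σ_n ‖E[f∘T^n | ℳ]‖_q.) -/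
open MeasureTheory
open scoped ENNReal

/-!
Write `A n = 2ⁿ⁺¹ ∫∫_{|x-y| ≤ 2⁻⁽ⁿ⁺¹⁾} |f x - f y|^q` and `α = q - 1 + δ`. Hölder's inequality for
series with the weights `w n = (n + 1)^α` gives
`∑ A n^(1/q) ≤ (∑ w n A n)^(1/q) (∑ w n^(-1/(q-1)))^(1-1/q)`, and the second factor is finite
because `α > q - 1`. By Tonelli, `∑ w n A n` is the double integral of `|f x - f y|^q` against
`∑_{2ⁿ⁺¹ ≤ 1/r} (n + 1)^α 2ⁿ⁺¹` with `r = |x - y|`, a geometric sum bounded by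
`2 (log₂ (1/r))^α / r`; so it is controlled by the hypothesis.
-/

theorem ENNReal.tsum_rpow_one_div_le_of_weight {ι : Type*} {q : ℝ} (hq : 1 < q)
    {w a : ι → ℝ≥0∞} (hw₀ : ∀ i, w i ≠ 0) (hw : ∀ i, w i ≠ ⊤) :
    ∑' i, a i ^ (1 / q)
      ≤ (∑' i, w i * a i) ^ (1 / q) * (∑' i, w i ^ (-(q - 1)⁻¹)) ^ (1 - 1 / q) := by
  let _ : MeasurableSpace ι := ⊤
  have hpq : q.HolderConjugate q.conjExponent := .conjExponent hq
  have hq₀ : 0 < q := by linarith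
  have hprod : ∀ i, a i ^ (1 / q) = (w i * a i) ^ (1 / q) * w i ^ (-(1 / q)) := by
    intro i
    rw [ENNReal.mul_rpow_of_nonneg _ _ (by positivity), mul_right_comm,
      ← ENNReal.rpow_add _ _ (hw₀ i) (hw i), add_neg_cancel, ENNReal.rpow_zero, one_mul]
  have hpow : ∀ i, (w i ^ (-(1 / q))) ^ q.conjExponent = w i ^ (-(q - 1)⁻¹) := by
    intro i
    rw [← ENNReal.rpow_mul, Real.conjExponent]
    congr 1
    field_simp
  have holder := ENNReal.lintegral_mul_le_Lp_mul_Lq Measure.count hpq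
    (f := fun i => (w i * a i) ^ (1 / q)) (g := fun i => w i ^ (-(1 / q)))
    measurable_from_top.aemeasurable measurable_from_top.aemeasurable
  simp only [lintegral_count' measurable_from_top, Pi.mul_apply, ← hprod, hpow,
    ← ENNReal.rpow_mul, one_div_mul_cancel hq₀.ne', ENNReal.rpow_one] at holder
  have hexp : 1 / q.conjExponent = 1 - 1 / q := by
    rw [one_div, one_div, ← hpq.inv_add_inv_eq_one]; ring
  rwa [hexp] at holder

theorem le_inv_two_pow_iff_le_logb {r : ℝ} (hr : 0 < r) (m : ℕ) :
    r ≤ ((2 : ℝ) ^ m)⁻¹ ↔ (m : ℝ) ≤ Real.logb 2 r⁻¹ := by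
  rw [Real.le_logb_iff_rpow_le one_lt_two (inv_pos.mpr hr), Real.rpow_natCast,
    le_inv_comm₀ hr (by positivity)]

theorem tsum_ite_le_inv_two_pow_le {α r : ℝ} (hα : 0 ≤ α) (hr : 0 < r) (hr₁ : r ≤ 1) :
    ∑' n : ℕ, (if r ≤ ((2 : ℝ) ^ (n + 1))⁻¹
        then ENNReal.ofReal (((n : ℝ) + 1) ^ α * 2 ^ (n + 1)) else 0)
      ≤ ENNReal.ofReal (2 * Real.logb 2 r⁻¹ ^ α / r) := by
  set L := Real.logb 2 r⁻¹
  have hL : 0 ≤ L := Real.logb_nonneg one_lt_two (one_le_inv₀ hr |>.mpr hr₁)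
  set N := ⌊L⌋₊
  have hcond : ∀ n : ℕ, r ≤ ((2 : ℝ) ^ (n + 1))⁻¹ ↔ n < N := fun n => by
    rw [le_inv_two_pow_iff_le_logb hr, Nat.lt_iff_add_one_le, Nat.le_floor_iff hL]
  have h2N : (2 : ℝ) ^ N ≤ r⁻¹ := by
    rw [← le_inv_comm₀ hr (by positivity), le_inv_two_pow_iff_le_logb hr]
    exact Nat.floor_le hL
  have hgeom : ∑ n ∈ Finset.range N, (2 : ℝ) ^ (n + 1) ≤ 2 * 2 ^ N := by
    have := geom_sum_eq (by norm_num : (2 : ℝ) ≠ 1) N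
    simp only [pow_succ, ← Finset.sum_mul, this]
    norm_num
    linarith
  calc _ = ENNReal.ofReal (∑ n ∈ Finset.range N, ((n : ℝ) + 1) ^ α * 2 ^ (n + 1)) := by
        rw [ENNReal.ofReal_sum_of_nonneg fun n _ => by positivity,
          tsum_eq_sum (s := Finset.range N) fun n hn =>
            if_neg (mt (hcond n).mp (by simpa using hn))]
        exact Finset.sum_congr rfl fun n hn => if_pos ((hcond n).mpr (by simpa using hn))
    _ ≤ ENNReal.ofReal (L ^ α * ∑ n ∈ Finset.range N, (2 : ℝ) ^ (n + 1)) := by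
        rw [Finset.mul_sum]
        refine ENNReal.ofReal_le_ofReal (Finset.sum_le_sum fun n hn => ?_)
        have hn : (n : ℝ) + 1 ≤ L := by
          exact_mod_cast (le_inv_two_pow_iff_le_logb hr (n + 1)).mp
            ((hcond n).mpr (Finset.mem_range.mp hn))
        gcongr
    _ ≤ ENNReal.ofReal (2 * L ^ α / r) := by
        refine ENNReal.ofReal_le_ofReal ?_
        calc L ^ α * ∑ n ∈ Finset.range N, (2 : ℝ) ^ (n + 1) ≤ L ^ α * (2 * r⁻¹) := by
              gcongr; linarith
          _ = 2 * L ^ α / r := by ring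

theorem tsum_ite_le_inv_two_pow_mul_le {α r a : ℝ} (hα : 0 ≤ α) (hr : 0 < r) (hr₁ : r ≤ 1) :
    (∑' n : ℕ, if r ≤ ((2 : ℝ) ^ (n + 1))⁻¹
        then ENNReal.ofReal (((n : ℝ) + 1) ^ α * 2 ^ (n + 1)) else 0) * ENNReal.ofReal a
      ≤ ENNReal.ofReal (2 / Real.log 2 ^ α) * ENNReal.ofReal (a / r * Real.log (1 / r) ^ α) := by
  have hlog : 0 ≤ Real.log r⁻¹ := Real.log_nonneg (one_le_inv₀ hr |>.mpr hr₁)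
  have hlog2 : 0 < Real.log 2 := Real.log_pos one_lt_two
  calc _ ≤ ENNReal.ofReal (2 * Real.logb 2 r⁻¹ ^ α / r) * ENNReal.ofReal a := by
        gcongr; exact tsum_ite_le_inv_two_pow_le hα hr hr₁
    _ = _ := by
        rw [Real.logb, Real.div_rpow hlog hlog2.le, ← ENNReal.ofReal_mul (by positivity),
          ← ENNReal.ofReal_mul (by positivity), one_div r]
        congr 1
        field_simp

theorem tsum_lintegral_lintegral {α β ι : Type*} [MeasurableSpace α] [MeasurableSpace β]
    [Countable ι] {μ : Measure α} {ν : Measure β} [SFinite ν] {F : ι → α → β → ℝ≥0∞}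
    (hF : ∀ i, Measurable (Function.uncurry (F i))) :
    ∑' i, ∫⁻ x, ∫⁻ y, F i x y ∂ν ∂μ = ∫⁻ x, ∫⁻ y, ∑' i, F i x y ∂ν ∂μ := by
  rw [← lintegral_tsum (f := fun i x => ∫⁻ y, F i x y ∂ν)
    fun i => (hF i).lintegral_prod_right'.aemeasurable]
  exact lintegral_congr fun x =>
    (lintegral_tsum fun i => ((hF i).comp measurable_prodMk_left).aemeasurable).symm

theorem tsum_mul_dyadic_near_diagonal_le {α : ℝ} (hα : 0 ≤ α) {g : ℝ → ℝ → ℝ}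
    (hg : Measurable (Function.uncurry g)) (hg_diag : ∀ x, g x x = 0) :
    ∑' n : ℕ, ENNReal.ofReal (((n : ℝ) + 1) ^ α) *
        (ENNReal.ofReal ((2 : ℝ) ^ (n + 1)) *
          ∫⁻ x in Set.Icc (0 : ℝ) 1, ∫⁻ y in Set.Icc (0 : ℝ) 1,
            (if |x - y| ≤ ((2 : ℝ) ^ (n + 1))⁻¹ then ENNReal.ofReal (g x y) else 0))
      ≤ ENNReal.ofReal (2 / Real.log 2 ^ α) *
          ∫⁻ x in Set.Icc (0 : ℝ) 1, ∫⁻ y in Set.Icc (0 : ℝ) 1,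
            ENNReal.ofReal (g x y / |x - y| * Real.log (1 / |x - y|) ^ α) := by
  set c : ℕ → ℝ → ℝ≥0∞ := fun n r =>
    if r ≤ ((2 : ℝ) ^ (n + 1))⁻¹ then ENNReal.ofReal (((n : ℝ) + 1) ^ α * 2 ^ (n + 1)) else 0
  have hc : ∀ n, Measurable (Function.uncurry fun x y => c n |x - y| * ENNReal.ofReal (g x y)) :=
    fun n => (Measurable.ite (measurableSet_le (by fun_prop) measurable_const) measurable_const
      measurable_const).mul hg.ennreal_ofReal
  have hpoint : ∀ x ∈ Set.Icc (0 : ℝ) 1, ∀ y ∈ Set.Icc (0 : ℝ) 1,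
      (∑' n, c n |x - y|) * ENNReal.ofReal (g x y)
        ≤ ENNReal.ofReal (2 / Real.log 2 ^ α) *
            ENNReal.ofReal (g x y / |x - y| * Real.log (1 / |x - y|) ^ α) := by
    intro x hx y hy
    rcases (abs_nonneg (x - y)).eq_or_lt with hxy | hxy
    · rw [eq_comm, abs_eq_zero, sub_eq_zero] at hxy
      simp [hxy, hg_diag]
    exact tsum_ite_le_inv_two_pow_mul_le hα hxy
      (abs_sub_le_iff.mpr ⟨by linarith [hx.2, hy.1], by linarith [hx.1, hy.2]⟩)
  calc _ = ∑' n : ℕ, ∫⁻ x in Set.Icc (0 : ℝ) 1, ∫⁻ y in Set.Icc (0 : ℝ) 1,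
          c n |x - y| * ENNReal.ofReal (g x y) := by
        refine tsum_congr fun n => ?_
        rw [← mul_assoc, ← ENNReal.ofReal_mul (by positivity),
          ← lintegral_const_mul' _ _ ENNReal.ofReal_ne_top]
        refine lintegral_congr fun x => ?_
        rw [← lintegral_const_mul' _ _ ENNReal.ofReal_ne_top]
        refine lintegral_congr fun y => ?_
        simp only [c]
        split_ifs <;> simp
    _ = ∫⁻ x in Set.Icc (0 : ℝ) 1, ∫⁻ y in Set.Icc (0 : ℝ) 1,
          (∑' n, c n |x - y|) * ENNReal.ofReal (g x y) := by
        simp only [tsum_lintegral_lintegral hc, ENNReal.tsum_mul_right]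
    _ ≤ ∫⁻ x in Set.Icc (0 : ℝ) 1, ∫⁻ y in Set.Icc (0 : ℝ) 1,
          ENNReal.ofReal (2 / Real.log 2 ^ α) *
            ENNReal.ofReal (g x y / |x - y| * Real.log (1 / |x - y|) ^ α) :=
        setLIntegral_mono' measurableSet_Icc fun x hx =>
          setLIntegral_mono' measurableSet_Icc fun y hy => hpoint x hx y hy
    _ = _ := by
        simp only [lintegral_const_mul' _ _ ENNReal.ofReal_ne_top]

theorem tsum_ofReal_nat_add_one_rpow_ne_top {p : ℝ} (hp : p < -1) :
    ∑' n : ℕ, ENNReal.ofReal (((n : ℝ) + 1) ^ p) ≠ ⊤ := by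
  have hsum : Summable fun n : ℕ => ((n : ℝ) + 1) ^ p := by
    simpa using (summable_nat_add_iff 1).mpr (Real.summable_nat_rpow.mpr hp)
  rw [← ENNReal.ofReal_tsum_of_nonneg (fun n => by positivity) hsum]
  exact ENNReal.ofReal_ne_top

/-- **Lemma 3.3 (key estimate)**: if for some `q > 1` and `δ > 0`
`∫₀¹∫₀¹ (|f(x)-f(y)|^q/|x-y|) (log(1/|x-y|))^{q-1+δ} dx dy < ∞`, then
`∑_{n≥1} (2ⁿ ∫₀¹∫₀¹ 1_{|x-y| ≤ 2⁻ⁿ} |f(x)-f(y)|^q dx dy)^{1/q} < ∞`. -/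
theorem stmt18 (q δ : ℝ) (hq : 1 < q) (hδ : 0 < δ)
    (f : ℝ → ℝ) (hfmeas : Measurable f)
    (hreg : (∫⁻ x in Set.Icc (0 : ℝ) 1, ∫⁻ y in Set.Icc (0 : ℝ) 1,
        ENNReal.ofReal
          (|f x - f y| ^ q / |x - y| * Real.log (1 / |x - y|) ^ (q - 1 + δ))) < ⊤) :
    (∑' n : ℕ,
        (ENNReal.ofReal ((2 : ℝ) ^ (n + 1)) *
          ∫⁻ x in Set.Icc (0 : ℝ) 1, ∫⁻ y in Set.Icc (0 : ℝ) 1,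
            (if |x - y| ≤ ((2 : ℝ) ^ (n + 1))⁻¹ then ENNReal.ofReal (|f x - f y| ^ q)
              else 0)) ^ (1 / q)) < ⊤ := by
  set α := q - 1 + δ
  have hα : 0 < α := by linarith
  have hq₁ : 0 < q - 1 := by linarith
  set w : ℕ → ℝ≥0∞ := fun n => ENNReal.ofReal (((n : ℝ) + 1) ^ α)
  have hweighted := tsum_mul_dyadic_near_diagonal_le hα.le (g := fun x y => |f x - f y| ^ q)
    (by fun_prop) (fun x => by simp [Real.zero_rpow (by linarith : q ≠ 0)])
  have hdual : ∑' n, w n ^ (-(q - 1)⁻¹) ≠ ⊤ := by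
    have hpow : ∀ n, w n ^ (-(q - 1)⁻¹) = ENNReal.ofReal (((n : ℝ) + 1) ^ (α * -(q - 1)⁻¹)) :=
      fun n => by rw [ENNReal.ofReal_rpow_of_pos (by positivity), ← Real.rpow_mul (by positivity)]
    rw [tsum_congr hpow]
    refine tsum_ofReal_nat_add_one_rpow_ne_top ?_
    rw [mul_neg, neg_lt_neg_iff, ← div_eq_mul_inv, one_lt_div hq₁]
    linarith
  refine (ENNReal.tsum_rpow_one_div_le_of_weight hq (w := w) (fun n => by simp [w]; positivity)
    (fun n => ENNReal.ofReal_ne_top)).trans_lt (ENNReal.mul_lt_top ?_ ?_)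
  · exact ENNReal.rpow_lt_top_of_nonneg (by positivity)
      (ne_top_of_le_ne_top (ENNReal.mul_ne_top ENNReal.ofReal_ne_top hreg.ne) hweighted)
  · exact ENNReal.rpow_lt_top_of_nonneg
      (by rw [sub_nonneg, div_le_one (by linarith)]; linarith) hdual
end
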